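/- arXiv:1410.5728 — 9 statements merged into one kernel-verified Lean document; each statement's English description precedes it below -/
import Mathlib

section
/- The space P₂ has exactly four path components, namely the four sets {φ ∈ P₂ : b₁ > 0 and c₂ > 0}, {φ ∈ P₂ : b₁ > 0 and c₂ < 0}, {φ ∈ P₂ : b₁ < 0 and c₂ > 0} and {φ ∈ P₂ : b₁ < 0 and c₂ < 0}, where b₁ and c₂ denote the leading coefficients of the second and third component polynomials. -/
open Polynomial

/-- `(f, g, h)` defines a polynomial knot: the map `t ↦ (f t, g t, h t)` is injective
and its derivative never vanishes. -/
def IsPolyKnot (f g h : Polynomial ℝ) : Prop :=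
  Function.Injective (fun t : ℝ => (f.eval t, g.eval t, h.eval t)) ∧
  ∀ t : ℝ, ((derivative f).eval t, (derivative g).eval t, (derivative h).eval t)
      ≠ ((0 : ℝ), (0 : ℝ), (0 : ℝ))

/-- The space `A₂ ≅ ℝ⁶` of coefficient tuples `(a₀, b₀, b₁, c₀, c₁, c₂)`, and inside it the
set `P₂` of tuples defining a polynomial knot `(f, g, h)` with `deg f < deg g < deg h ≤ 2`. -/
def P2 : Set (Fin 6 → ℝ) :=
  {x | IsPolyKnot (C (x 0)) (C (x 2) * X + C (x 1)) (C (x 5) * X ^ 2 + C (x 4) * X + C (x 3)) ∧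
    (C (x 0) : Polynomial ℝ).natDegree < (C (x 2) * X + C (x 1)).natDegree ∧
    (C (x 2) * X + C (x 1)).natDegree < (C (x 5) * X ^ 2 + C (x 4) * X + C (x 3)).natDegree ∧
    (C (x 5) * X ^ 2 + C (x 4) * X + C (x 3)).natDegree ≤ 2}

/-!
Every tuple with `b₁ ≠ 0` already defines a knot, because its middle coordinate `b₁ t + b₀` is
injective with nonzero derivative; the degree conditions then say exactly `b₁ ≠ 0` and `c₂ ≠ 0`.
So `P₂` is the complement of two coordinate hyperplanes in `ℝ⁶`. The signs of `b₁` and `c₂` are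
constant along paths by the intermediate value theorem, and each of the four sign regions is
convex, hence path connected.
-/

lemma isPolyKnot_of_linear (f h : ℝ[X]) {a b : ℝ} (hb : b ≠ 0) :
    IsPolyKnot f (C b * X + C a) h := by
  refine ⟨fun s t hst => ?_, fun t hderiv => ?_⟩
  · simp only [Prod.mk.injEq, eval_add, eval_mul, eval_C, eval_X] at hst
    exact mul_left_cancel₀ hb (add_right_cancel hst.2.1)
  · simp only [Prod.mk.injEq, derivative_add, derivative_mul, derivative_C, derivative_X,
      zero_mul, mul_one, zero_add, add_zero, eval_C] at hderiv
    exact hb hderiv.2.1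

lemma mem_P2_iff (x : Fin 6 → ℝ) : x ∈ P2 ↔ x 2 ≠ 0 ∧ x 5 ≠ 0 := by
  constructor
  · rintro ⟨-, hfg, hgh, -⟩
    have hb : x 2 ≠ 0 := by
      rintro hb
      simp [hb] at hfg
    refine ⟨hb, fun hc => ?_⟩
    rw [hc, natDegree_linear hb, map_zero, zero_mul, zero_add] at hgh
    exact lt_irrefl 1 (hgh.trans_le natDegree_linear_le)
  · rintro ⟨hb, hc⟩
    refine ⟨isPolyKnot_of_linear _ _ hb, ?_, ?_, (natDegree_quadratic hc).le⟩
    · rw [natDegree_C, natDegree_linear hb]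
      exact one_pos
    · rw [natDegree_linear hb, natDegree_quadratic hc]
      exact one_lt_two

lemma exists_mem_P2 {b c : ℝ} (hb : b ≠ 0) (hc : c ≠ 0) : ∃ x ∈ P2, x 2 = b ∧ x 5 = c :=
  ⟨![0, 0, b, 0, 0, c], (mem_P2_iff _).2 ⟨hb, hc⟩, rfl, rfl⟩

lemma JoinedIn.pos_iff_pos {X : Type*} [TopologicalSpace X] {S : Set X} {x y : X} {f : X → ℝ}
    (hf : ContinuousOn f S) (hS : ∀ z ∈ S, f z ≠ 0) (h : JoinedIn S x y) :
    0 < f x ↔ 0 < f y := by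
  suffices key : ∀ {x y : X}, JoinedIn S x y → 0 < f x → 0 < f y from ⟨key h, key h.symm⟩
  intro x y h hx
  by_contra! hy
  obtain ⟨γ, hγ⟩ := h
  have hrange : Set.range γ ⊆ S := Set.range_subset_iff.2 hγ
  obtain ⟨z, ⟨t, rfl⟩, hz⟩ :=
    (isConnected_range γ.continuous).isPreconnected.intermediate_value ⟨1, γ.target⟩
      ⟨0, γ.source⟩ (hf.mono hrange) ⟨hy, hx.le⟩
  exact hS _ (hγ t) hz

lemma mul_pos_of_pos_iff_pos {R : Type*} [Ring R] [LinearOrder R] [IsStrictOrderedRing R]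
    {a b : R} (ha : a ≠ 0) (hb : b ≠ 0) (h : 0 < a ↔ 0 < b) : 0 < a * b := by
  rcases ha.lt_or_gt with ha | ha
  · exact mul_pos_of_neg_of_neg ha (hb.lt_of_le (not_lt.1 fun hb => ha.not_gt (h.2 hb)))
  · exact mul_pos ha (h.1 ha)

lemma convex_setOf_mul_pos {ι : Type*} (a : ℝ) (i : ι) :
    Convex ℝ {z : ι → ℝ | 0 < a * z i} :=
  convex_halfSpace_gt (a • LinearMap.proj (R := ℝ) (φ := fun _ : ι => ℝ) i).isLinear 0

lemma joinedIn_P2 {x y : Fin 6 → ℝ} (hx : x ∈ P2) (hy : y ∈ P2)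
    (h2 : 0 < x 2 ↔ 0 < y 2) (h5 : 0 < x 5 ↔ 0 < y 5) : JoinedIn P2 x y := by
  rw [mem_P2_iff] at hx hy
  let region : Set (Fin 6 → ℝ) := {z | 0 < x 2 * z 2} ∩ {z | 0 < x 5 * z 5}
  have hx_mem : x ∈ region := ⟨mul_self_pos.2 hx.1, mul_self_pos.2 hx.2⟩
  have hy_mem : y ∈ region :=
    ⟨mul_pos_of_pos_iff_pos hx.1 hy.1 h2, mul_pos_of_pos_iff_pos hx.2 hy.2 h5⟩
  have hsub : region ⊆ P2 := fun z hz =>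
    (mem_P2_iff z).2 ⟨right_ne_zero_of_mul hz.1.ne', right_ne_zero_of_mul hz.2.ne'⟩
  exact (((convex_setOf_mul_pos _ 2).inter (convex_setOf_mul_pos _ 5)).isPathConnected
    ⟨x, hx_mem⟩ |>.joinedIn x hx_mem y hy_mem).mono hsub

/-- `P₂` has exactly four path components, namely the four sets determined by the
signs of the leading coefficients `b₁ = x 2` and `c₂ = x 5`: each of these four sets is
nonempty, and two points of `P₂` are joined by a path in `P₂` if and only if their leading
coefficients `b₁` and `c₂` have matching signs. -/
theorem stmt_2 :
    ({x ∈ P2 | 0 < x 2 ∧ 0 < x 5}).Nonempty ∧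
    ({x ∈ P2 | 0 < x 2 ∧ x 5 < 0}).Nonempty ∧
    ({x ∈ P2 | x 2 < 0 ∧ 0 < x 5}).Nonempty ∧
    ({x ∈ P2 | x 2 < 0 ∧ x 5 < 0}).Nonempty ∧
    ∀ x ∈ P2, ∀ y ∈ P2,
      (JoinedIn P2 x y ↔ ((0 < x 2 ↔ 0 < y 2) ∧ (0 < x 5 ↔ 0 < y 5))) := by
  refine ⟨?_, ?_, ?_, ?_, fun x hx y hy => ⟨fun h => ⟨?_, ?_⟩, fun h => joinedIn_P2 hx hy h.1 h.2⟩⟩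
  · obtain ⟨x, hx, hb, hc⟩ := exists_mem_P2 (b := 1) (c := 1) one_ne_zero one_ne_zero
    exact ⟨x, hx, by norm_num [hb, hc]⟩
  · obtain ⟨x, hx, hb, hc⟩ := exists_mem_P2 (b := 1) (c := -1) one_ne_zero (by norm_num)
    exact ⟨x, hx, by norm_num [hb, hc]⟩
  · obtain ⟨x, hx, hb, hc⟩ := exists_mem_P2 (b := -1) (c := 1) (by norm_num) one_ne_zero
    exact ⟨x, hx, by norm_num [hb, hc]⟩
  · obtain ⟨x, hx, hb, hc⟩ := exists_mem_P2 (b := -1) (c := -1) (by norm_num) (by norm_num)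
    exact ⟨x, hx, by norm_num [hb, hc]⟩
  · exact h.pos_iff_pos (continuous_apply 2).continuousOn fun z hz => ((mem_P2_iff z).1 hz).1
  · exact h.pos_iff_pos (continuous_apply 5).continuousOn fun z hz => ((mem_P2_iff z).1 hz).2
end

section
/- The space P₃ is path connected. -/
open Polynomial

/-- The space `A₃ ≅ ℝ⁹` of coefficient tuples `(a₀, a₁, b₀, b₁, b₂, c₀, c₁, c₂, c₃)`, and inside
it the set `P₃` of tuples defining a polynomial knot `(f, g, h)` with `deg f < deg g < deg h ≤ 3`. -/
def P3 : Set (Fin 9 → ℝ) :=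
  {x | IsPolyKnot (C (x 1) * X + C (x 0)) (C (x 4) * X ^ 2 + C (x 3) * X + C (x 2))
        (C (x 8) * X ^ 3 + C (x 7) * X ^ 2 + C (x 6) * X + C (x 5)) ∧
    (C (x 1) * X + C (x 0)).natDegree < (C (x 4) * X ^ 2 + C (x 3) * X + C (x 2)).natDegree ∧
    (C (x 4) * X ^ 2 + C (x 3) * X + C (x 2)).natDegree
      < (C (x 8) * X ^ 3 + C (x 7) * X ^ 2 + C (x 6) * X + C (x 5)).natDegree ∧
    (C (x 8) * X ^ 3 + C (x 7) * X ^ 2 + C (x 6) * X + C (x 5)).natDegree ≤ 3}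

/-! ### Auxiliary lemmas -/

lemma knot_f {x : Fin 9 → ℝ} (h1 : x 1 ≠ 0) :
    IsPolyKnot (C (x 1) * X + C (x 0)) (C (x 4) * X ^ 2 + C (x 3) * X + C (x 2))
      (C (x 8) * X ^ 3 + C (x 7) * X ^ 2 + C (x 6) * X + C (x 5)) := by
  constructor
  · intro t s hts
    have h := congrArg Prod.fst hts
    simp only [eval_add, eval_mul, eval_C, eval_X] at h
    have h2 : x 1 * t = x 1 * s := by linarith
    exact mul_left_cancel₀ h1 h2
  · intro t h
    simp only [Prod.mk.injEq] at h
    apply h1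
    have := h.1
    simpa using this

lemma knot_g {x : Fin 9 → ℝ} (h4 : x 4 = 0) (h3 : x 3 ≠ 0) :
    IsPolyKnot (C (x 1) * X + C (x 0)) (C (x 4) * X ^ 2 + C (x 3) * X + C (x 2))
      (C (x 8) * X ^ 3 + C (x 7) * X ^ 2 + C (x 6) * X + C (x 5)) := by
  constructor
  · intro t s hts
    have h := congrArg (fun p => p.2.1) hts
    simp only [eval_add, eval_mul, eval_C, eval_X, eval_pow, h4] at h
    have h2 : x 3 * t = x 3 * s := by nlinarith [h]
    exact mul_left_cancel₀ h3 h2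
  · intro t h
    simp only [Prod.mk.injEq] at h
    apply h3
    have := h.2.1
    simp only [derivative_add, derivative_mul, derivative_C, derivative_X, derivative_X_pow] at this
    simp only [eval_add, eval_mul, eval_C, eval_X, eval_pow, eval_natCast, eval_zero, eval_one] at this
    norm_num [h4] at this
    linarith [this]

lemma knot_h {x : Fin 9 → ℝ} (h5 : x 5 = 0) (h7 : x 7 = 0) (h68 : x 6 = x 8) (h8 : x 8 ≠ 0) :
    IsPolyKnot (C (x 1) * X + C (x 0)) (C (x 4) * X ^ 2 + C (x 3) * X + C (x 2))
      (C (x 8) * X ^ 3 + C (x 7) * X ^ 2 + C (x 6) * X + C (x 5)) := by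
  constructor
  · intro t s hts
    have h := congrArg (fun p => p.2.2) hts
    simp only [eval_add, eval_mul, eval_C, eval_X, eval_pow, h5, h7, h68] at h
    have h2 : x 8 * (t ^ 3 + t) = x 8 * (s ^ 3 + s) := by ring_nf; ring_nf at h; linarith
    have h3 : t ^ 3 + t = s ^ 3 + s := mul_left_cancel₀ h8 h2
    have key : (t - s) * (t ^ 2 + t * s + s ^ 2 + 1) = 0 := by ring_nf; nlinarith [h3]
    have pos : t ^ 2 + t * s + s ^ 2 + 1 > 0 := by nlinarith [sq_nonneg (t + s), sq_nonneg (t - s)]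
    rcases mul_eq_zero.mp key with h' | h'
    · linarith
    · linarith
  · intro t h
    simp only [Prod.mk.injEq] at h
    have := h.2.2
    simp only [derivative_add, derivative_mul, derivative_C, derivative_X, derivative_X_pow] at this
    simp only [eval_add, eval_mul, eval_C, eval_X, eval_pow, eval_natCast, eval_zero, eval_one] at this
    norm_num [h7, h68] at this
    apply h8
    nlinarith [this, sq_nonneg t]

lemma ndeg_quad_pos {a b c : ℝ} (h : a ≠ 0 ∨ b ≠ 0) :
    0 < (C a * X ^ 2 + C b * X + C c).natDegree := by
  rcases em (a = 0) with ha | ha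
  · have hb := h.resolve_left (by simp [ha])
    rw [ha, map_zero, zero_mul, zero_add, natDegree_linear hb]
    norm_num
  · rw [natDegree_quadratic ha]; norm_num

lemma ndeg_quad_lt3 {a b c : ℝ} : (C a * X ^ 2 + C b * X + C c).natDegree < 3 :=
  lt_of_le_of_lt natDegree_quadratic_le (by norm_num)

lemma ndeg_lin_lt_quad {a b a' b' c' : ℝ} (ha : a = 0) (h : a' ≠ 0 ∨ b' ≠ 0) :
    (C a * X + C b).natDegree < (C a' * X ^ 2 + C b' * X + C c').natDegree := by
  rw [ha, map_zero, zero_mul, zero_add, natDegree_C]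
  exact ndeg_quad_pos h

lemma ndeg_lin_lt_quad' {a b a' b' c' : ℝ} (ha' : a' ≠ 0) :
    (C a * X + C b).natDegree < (C a' * X ^ 2 + C b' * X + C c').natDegree := by
  rw [natDegree_quadratic ha']
  exact lt_of_le_of_lt natDegree_linear_le (by norm_num)

lemma ndeg_cubic_gt1 {a b c d : ℝ} (h : a ≠ 0 ∨ b ≠ 0) :
    1 < (C a * X ^ 3 + C b * X ^ 2 + C c * X + C d).natDegree := by
  rcases em (a = 0) with ha | ha
  · have hb := h.resolve_left (by simp [ha])
    rw [ha, map_zero, zero_mul, zero_add, natDegree_quadratic hb]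
    norm_num
  · rw [natDegree_cubic ha]; norm_num

/-- Membership in `P3` via the linear component: `a₁ ≠ 0`. -/
lemma mem1 {x : Fin 9 → ℝ} (h1 : x 1 ≠ 0) (h4 : x 4 ≠ 0) (h8 : x 8 ≠ 0) : x ∈ P3 := by
  refine ⟨knot_f h1, ?_, ?_, natDegree_cubic_le⟩
  · exact ndeg_lin_lt_quad' h4
  · rw [natDegree_quadratic h4, natDegree_cubic h8]; norm_num

/-- Membership in `P3` via the quadratic component being a nonconstant linear polynomial. -/
lemma mem2 {x : Fin 9 → ℝ} (h1 : x 1 = 0) (h4 : x 4 = 0) (h3 : x 3 ≠ 0)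
    (hH : x 8 ≠ 0 ∨ x 7 ≠ 0) : x ∈ P3 := by
  refine ⟨knot_g h4 h3, ?_, ?_, natDegree_cubic_le⟩
  · exact ndeg_lin_lt_quad h1 (Or.inr h3)
  · calc (C (x 4) * X ^ 2 + C (x 3) * X + C (x 2)).natDegree = 1 := by
          rw [h4, map_zero, zero_mul, zero_add, natDegree_linear h3]
      _ < _ := ndeg_cubic_gt1 hH

/-- Membership in `P3` via the cubic component being `c·(X³+X)`. -/
lemma mem3 {x : Fin 9 → ℝ} (h5 : x 5 = 0) (h7 : x 7 = 0) (h68 : x 6 = x 8) (h8 : x 8 ≠ 0)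
    (hfg : x 4 ≠ 0 ∨ (x 1 = 0 ∧ x 3 ≠ 0)) : x ∈ P3 := by
  refine ⟨knot_h h5 h7 h68 h8, ?_, ?_, natDegree_cubic_le⟩
  · rcases hfg with h | ⟨ha, hb⟩
    · exact ndeg_lin_lt_quad' h
    · exact ndeg_lin_lt_quad ha (Or.inr hb)
  · rw [natDegree_cubic h8]; exact ndeg_quad_lt3

/-- Straight-line segments contained in a set give paths. -/
lemma joinedIn_seg {S : Set (Fin 9 → ℝ)} {x y : Fin 9 → ℝ}
    (h : ∀ s : ℝ, s ∈ Set.Icc (0:ℝ) 1 → (fun i => (1 - s) * x i + s * y i) ∈ S) :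
    JoinedIn S x y := by
  refine ⟨⟨⟨fun s => fun i => (1 - (s : ℝ)) * x i + (s : ℝ) * y i, ?_⟩, ?_, ?_⟩,
    fun t => h t t.2⟩
  · apply continuous_pi
    intro i
    fun_prop
  · ext i; norm_num
  · ext i; norm_num

/-- The hub point: `f = 0`, `g = X²`, `h = X³ + X`. -/
def Qpt : Fin 9 → ℝ := ![0,0,0,0,1,0,1,0,1]

lemma Qpt_mem : Qpt ∈ P3 := by
  refine mem3 (x := Qpt) rfl rfl rfl ?_ (Or.inl ?_) <;>
    · show (1 : ℝ) ≠ 0; norm_num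

/-- Points with `g` a nonconstant linear polynomial are joined to the hub. -/
lemma LA {x : Fin 9 → ℝ} (h1 : x 1 = 0) (h4 : x 4 = 0) (h3 : x 3 ≠ 0)
    (hc : x 8 ≠ 0 ∨ x 7 ≠ 0) : JoinedIn P3 x Qpt := by
  have segFinal : JoinedIn P3 (![0,0,x 2,x 3,0, 0,1,0,1] : Fin 9 → ℝ) Qpt := by
    apply joinedIn_seg
    intro s hs
    refine mem3 ?_ ?_ ?_ ?_ ?_
    · show (1 - s) * 0 + s * 0 = 0; ring
    · show (1 - s) * 0 + s * 0 = 0; ring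
    · show (1 - s) * 1 + s * 1 = (1 - s) * 1 + s * 1; rfl
    · show (1 - s) * 1 + s * 1 ≠ 0; intro h'; norm_num at h'
    · rcases em (s = 0) with h0 | h0
      · refine Or.inr ⟨by show (1-s)*0 + s*0 = 0; ring, ?_⟩
        show (1 - s) * x 3 + s * 0 ≠ 0
        rw [h0]; simpa using h3
      · refine Or.inl ?_
        show (1 - s) * 0 + s * 1 ≠ 0
        simpa using h0
  rcases em (x 8 = 0) with h8 | h8
  · -- here x 7 ≠ 0
    have h7 := hc.resolve_left (by simp [h8])
    have segA : JoinedIn P3 x (![0,0,x 2,x 3,0, 0,0,x 7,0] : Fin 9 → ℝ) := by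
      apply joinedIn_seg
      intro s hs
      refine mem2 ?_ ?_ ?_ (Or.inr ?_)
      · show (1 - s) * x 1 + s * 0 = 0; rw [h1]; ring
      · show (1 - s) * x 4 + s * 0 = 0; rw [h4]; ring
      · show (1 - s) * x 3 + s * x 3 ≠ 0
        intro h'; exact h3 (by linarith)
      · show (1 - s) * x 7 + s * x 7 ≠ 0
        intro h'; exact h7 (by linarith)
    have segB : JoinedIn P3 (![0,0,x 2,x 3,0, 0,0,x 7,0] : Fin 9 → ℝ)
        (![0,0,x 2,x 3,0, 0,1,0,1] : Fin 9 → ℝ) := by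
      apply joinedIn_seg
      intro s hs
      refine mem2 ?_ ?_ ?_ ?_
      · show (1 - s) * 0 + s * 0 = 0; ring
      · show (1 - s) * 0 + s * 0 = 0; ring
      · show (1 - s) * x 3 + s * x 3 ≠ 0
        intro h'; exact h3 (by linarith)
      · rcases em (s = 0) with h0 | h0
        · refine Or.inr ?_
          show (1 - s) * x 7 + s * 0 ≠ 0
          rw [h0]; simpa using h7
        · refine Or.inl ?_
          show (1 - s) * 0 + s * 1 ≠ 0
          simpa using h0
    exact (segA.trans segB).trans segFinal
  · have segA : JoinedIn P3 x (![0,0,x 2,x 3,0, 0,0,0,x 8] : Fin 9 → ℝ) := by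
      apply joinedIn_seg
      intro s hs
      refine mem2 ?_ ?_ ?_ (Or.inl ?_)
      · show (1 - s) * x 1 + s * 0 = 0; rw [h1]; ring
      · show (1 - s) * x 4 + s * 0 = 0; rw [h4]; ring
      · show (1 - s) * x 3 + s * x 3 ≠ 0
        intro h'; exact h3 (by linarith)
      · show (1 - s) * x 8 + s * x 8 ≠ 0
        intro h'; exact h8 (by linarith)
    have segB : JoinedIn P3 (![0,0,x 2,x 3,0, 0,0,0,x 8] : Fin 9 → ℝ)
        (![0,0,x 2,x 3,0, 0,0,1,0] : Fin 9 → ℝ) := by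
      apply joinedIn_seg
      intro s hs
      refine mem2 ?_ ?_ ?_ ?_
      · show (1 - s) * 0 + s * 0 = 0; ring
      · show (1 - s) * 0 + s * 0 = 0; ring
      · show (1 - s) * x 3 + s * x 3 ≠ 0
        intro h'; exact h3 (by linarith)
      · rcases em (s = 0) with h0 | h0
        · refine Or.inl ?_
          show (1 - s) * x 8 + s * 0 ≠ 0
          rw [h0]; simpa using h8
        · refine Or.inr ?_
          show (1 - s) * 0 + s * 1 ≠ 0
          simpa using h0
    have segC : JoinedIn P3 (![0,0,x 2,x 3,0, 0,0,1,0] : Fin 9 → ℝ)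
        (![0,0,x 2,x 3,0, 0,1,0,1] : Fin 9 → ℝ) := by
      apply joinedIn_seg
      intro s hs
      refine mem2 ?_ ?_ ?_ ?_
      · show (1 - s) * 0 + s * 0 = 0; ring
      · show (1 - s) * 0 + s * 0 = 0; ring
      · show (1 - s) * x 3 + s * x 3 ≠ 0
        intro h'; exact h3 (by linarith)
      · rcases em (s = 0) with h0 | h0
        · refine Or.inr ?_
          show (1 - s) * 1 + s * 0 ≠ 0
          rw [h0]; norm_num
        · refine Or.inl ?_
          show (1 - s) * 0 + s * 1 ≠ 0
          simpa using h0
    exact ((segA.trans segB).trans segC).trans segFinal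

/-- Points with all three leading coefficients nonzero are joined to the hub. -/
lemma L1 {x : Fin 9 → ℝ} (h1 : x 1 ≠ 0) (h4 : x 4 ≠ 0) (h8 : x 8 ≠ 0) :
    JoinedIn P3 x Qpt := by
  have seg1 : JoinedIn P3 x (![0, x 1, 0,0,x 4, 0,x 8,0,x 8] : Fin 9 → ℝ) := by
    apply joinedIn_seg
    intro s hs
    refine mem1 ?_ ?_ ?_
    · show (1 - s) * x 1 + s * x 1 ≠ 0
      intro h'; exact h1 (by linarith)
    · show (1 - s) * x 4 + s * x 4 ≠ 0
      intro h'; exact h4 (by linarith)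
    · show (1 - s) * x 8 + s * x 8 ≠ 0
      intro h'; exact h8 (by linarith)
  have seg2 : JoinedIn P3 (![0, x 1, 0,0,x 4, 0,x 8,0,x 8] : Fin 9 → ℝ)
      (![0,0,0,0,x 4, 0,x 8,0,x 8] : Fin 9 → ℝ) := by
    apply joinedIn_seg
    intro s hs
    refine mem3 ?_ ?_ rfl ?_ (Or.inl ?_)
    · show (1 - s) * 0 + s * 0 = 0; ring
    · show (1 - s) * 0 + s * 0 = 0; ring
    · show (1 - s) * x 8 + s * x 8 ≠ 0
      intro h'; exact h8 (by linarith)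
    · show (1 - s) * x 4 + s * x 4 ≠ 0
      intro h'; exact h4 (by linarith)
  have seg3 : JoinedIn P3 (![0,0,0,0,x 4, 0,x 8,0,x 8] : Fin 9 → ℝ)
      (![0,0,0,1,0, 0,x 8,0,x 8] : Fin 9 → ℝ) := by
    apply joinedIn_seg
    intro s hs
    refine mem3 ?_ ?_ rfl ?_ ?_
    · show (1 - s) * 0 + s * 0 = 0; ring
    · show (1 - s) * 0 + s * 0 = 0; ring
    · show (1 - s) * x 8 + s * x 8 ≠ 0
      intro h'; exact h8 (by linarith)
    · rcases em ((1 - s) * x 4 = 0) with h0 | h0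
      · have hs1 : s = 1 := by
          rcases mul_eq_zero.mp h0 with h' | h'
          · linarith
          · exact absurd h' h4
        refine Or.inr ⟨by show (1-s)*0 + s*0 = 0; ring, ?_⟩
        show (1 - s) * 0 + s * 1 ≠ 0
        rw [hs1]; norm_num
      · refine Or.inl ?_
        show (1 - s) * x 4 + s * 0 ≠ 0
        simpa using h0
  have tail : JoinedIn P3 (![0,0,0,1,0, 0,x 8,0,x 8] : Fin 9 → ℝ) Qpt := by
    refine LA ?_ ?_ ?_ (Or.inl ?_)
    · rfl
    · rfl
    · show (1:ℝ) ≠ 0; norm_num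
    · exact h8
  exact ((seg1.trans seg2).trans seg3).trans tail

/-- The space `P₃` is path connected. -/
theorem stmt_4 : IsPathConnected P3 := by
  refine ⟨Qpt, Qpt_mem, fun {y} hy => ?_⟩
  suffices h : JoinedIn P3 y Qpt from h.symm
  obtain ⟨kn, d1, d2, d3⟩ := hy
  rcases em (y 1 = 0) with h1 | h1
  · rcases em (y 4 = 0) with h4 | h4
    · -- g is linear
      have h3 : y 3 ≠ 0 := by
        intro h3
        simp only [h4, h3, map_zero, zero_mul, zero_add, natDegree_C] at d1
        omega
      have hc : y 8 ≠ 0 ∨ y 7 ≠ 0 := by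
        by_contra hc
        push_neg at hc
        simp only [hc.1, hc.2, h4, map_zero, zero_mul, zero_add] at d2
        rw [natDegree_linear h3] at d2
        have := natDegree_linear_le (a := y 6) (b := y 5)
        omega
      exact LA h1 h4 h3 hc
    · -- g quadratic, so h cubic; push `a₁` up to 1 and use L1
      have h8 : y 8 ≠ 0 := by
        intro h8
        rw [h8, map_zero, zero_mul, zero_add, natDegree_quadratic h4] at d2
        have := natDegree_quadratic_le (a := y 7) (b := y 6) (c := y 5)
        omega
      have seg0 : JoinedIn P3 y (![y 0, 1, y 2, y 3, y 4, y 5, y 6, y 7, y 8] : Fin 9 → ℝ) := by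
        apply joinedIn_seg
        intro s hs
        rcases em (s = 0) with h0 | h0
        · have hxy : (fun i => (1 - s) * y i +
              s * (![y 0, 1, y 2, y 3, y 4, y 5, y 6, y 7, y 8] : Fin 9 → ℝ) i) = y := by
            funext i; rw [h0]; ring
          rw [hxy]
          exact ⟨kn, d1, d2, d3⟩
        · refine mem1 ?_ ?_ ?_
          · show (1 - s) * y 1 + s * 1 ≠ 0
            rw [h1]; simpa using h0
          · show (1 - s) * y 4 + s * y 4 ≠ 0
            intro h'; exact h4 (by linarith)
          · show (1 - s) * y 8 + s * y 8 ≠ 0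
            intro h'; exact h8 (by linarith)
      have tail : JoinedIn P3 (![y 0, 1, y 2, y 3, y 4, y 5, y 6, y 7, y 8] : Fin 9 → ℝ) Qpt := by
        refine L1 ?_ ?_ ?_
        · show (1:ℝ) ≠ 0; norm_num
        · exact h4
        · exact h8
      exact seg0.trans tail
  · -- f has degree 1, so g quadratic and h cubic
    have h4 : y 4 ≠ 0 := by
      intro h4
      rw [h4, map_zero, zero_mul, zero_add, natDegree_linear h1] at d1
      have := natDegree_linear_le (a := y 3) (b := y 2)
      omega
    have h8 : y 8 ≠ 0 := by
      intro h8
      rw [h8, map_zero, zero_mul, zero_add, natDegree_quadratic h4] at d2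
      have := natDegree_quadratic_le (a := y 7) (b := y 6) (c := y 5)
      omega
    exact L1 h1 h4 h8
end

section
/- For real numbers a, b, c, the polynomial map φ : ℝ → ℝ³ given by φ(t) = (t²+at, t³+bt, t⁴+ct) is injective with nowhere-vanishing derivative (i.e., is a polynomial knot) if and only if 3a²+4b > 0 or a³+2ab+c ≠ 0. -/
open Polynomial

/-- For real `a, b, c`, the map `t ↦ (t²+at, t³+bt, t⁴+ct)` is a polynomial
knot if and only if `3a²+4b > 0` or `a³+2ab+c ≠ 0`. -/
theorem stmt_7 (a b c : ℝ) :
    IsPolyKnot (X ^ 2 + C a * X) (X ^ 3 + C b * X) (X ^ 4 + C c * X) ↔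
      (0 < 3 * a ^ 2 + 4 * b ∨ a ^ 3 + 2 * a * b + c ≠ 0) := by
  constructor
  · -- forward, by contraposition
    intro hk
    by_contra hcon
    push_neg at hcon
    obtain ⟨hle, hc⟩ := hcon
    obtain ⟨hinj, hder⟩ := hk
    rcases lt_or_eq_of_le hle with hlt | heq
    · -- 3a²+4b < 0 : injectivity fails
      set d : ℝ := Real.sqrt (-3 * a ^ 2 - 4 * b) with hd
      have hd2 : d ^ 2 = -3 * a ^ 2 - 4 * b := by
        rw [hd, Real.sq_sqrt]; linarith
      have hdpos : 0 < d := Real.sqrt_pos.mpr (by linarith)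
      set s : ℝ := (-a + d) / 2
      set t : ℝ := (-a - d) / 2
      have hst : s ≠ t := by
        simp only [s, t]
        intro h
        have : d = 0 := by linarith
        linarith
      have : s = t := by
        apply hinj
        simp only [eval_add, eval_pow, eval_mul, eval_X, eval_C, Prod.mk.injEq]
        refine ⟨by ring, ?_, ?_⟩
        · simp only [s, t]; linear_combination (d / 4) * hd2
        · simp only [s, t]; linear_combination (-a * d / 2) * hd2 + d * hc
      exact hst this
    · -- 3a²+4b = 0 : derivative vanishes at -a/2
      apply hder (-a / 2)
      simp only [derivative_add, derivative_pow, derivative_mul, derivative_X, derivative_C,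
        eval_add, eval_mul, eval_pow, eval_X, eval_C, eval_zero, eval_one, Prod.mk.injEq]
      refine ⟨by ring, by linear_combination heq / 4, by linear_combination hc - (a / 2) * heq⟩
  · intro h
    constructor
    · intro s t hst
      simp only [eval_add, eval_pow, eval_mul, eval_X, eval_C, Prod.mk.injEq] at hst
      obtain ⟨e1, e2, e3⟩ := hst
      by_contra hne
      have hd : s - t ≠ 0 := sub_ne_zero.mpr hne
      have h1 : s + t + a = 0 := by
        have : (s - t) * (s + t + a) = 0 := by linear_combination e1
        rcases mul_eq_zero.mp this with h | h
        · exact absurd h hd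
        · exact h
      have h2 : s ^ 2 + s * t + t ^ 2 + b = 0 := by
        have : (s - t) * (s ^ 2 + s * t + t ^ 2 + b) = 0 := by linear_combination e2
        rcases mul_eq_zero.mp this with h | h
        · exact absurd h hd
        · exact h
      have h3 : s ^ 3 + s ^ 2 * t + s * t ^ 2 + t ^ 3 + c = 0 := by
        have : (s - t) * (s ^ 3 + s ^ 2 * t + s * t ^ 2 + t ^ 3 + c) = 0 := by
          linear_combination e3
        rcases mul_eq_zero.mp this with h | h
        · exact absurd h hd
        · exact h
      rcases h with h | h
      · have key : 3 * a ^ 2 + 4 * b = -(s - t) ^ 2 := by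
          linear_combination 3 * (a - s - t) * h1 + 4 * h2
        nlinarith [sq_nonneg (s - t)]
      · apply h
        linear_combination (a ^ 2 - a * (s + t) + (s + t) ^ 2 - 2 * (s ^ 2 + s * t + t ^ 2)) * h1
          + 2 * a * h2 + h3
    · intro t ht
      simp only [derivative_add, derivative_pow, derivative_mul, derivative_X, derivative_C,
        eval_add, eval_mul, eval_pow, eval_X, eval_C, eval_zero, eval_one, Prod.mk.injEq] at ht
      norm_num at ht
      obtain ⟨e1, e2, e3⟩ := ht
      rcases h with h | h
      · have key : 3 * a ^ 2 + 4 * b = 0 := by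
          linear_combination 3 * (a - 2 * t) * e1 + 4 * e2
        linarith
      · apply h
        linear_combination (a ^ 2 - 2 * a * t - 2 * t ^ 2) * e1 + 2 * a * e2 + e3
end

section
/- For e₁, e₂, e₃ ∈ {−1,1} and real numbers a, b, c, the polynomial map τ : ℝ → ℝ³ given by τ(t) = (e₁t²+at, e₂t³+bt, e₃t⁴+ct) is injective with nowhere-vanishing derivative (i.e., is a polynomial knot) if and only if 3a²+4e₂b > 0 or e₁a³+2e₁e₂ab+e₃c ≠ 0. -/
open Polynomial

/-- For `e₁, e₂, e₃ ∈ {−1,1}` and real `a, b, c`, the map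
`t ↦ (e₁t²+at, e₂t³+bt, e₃t⁴+ct)` is a polynomial knot if and only if
`3a²+4e₂b > 0` or `e₁a³+2e₁e₂ab+e₃c ≠ 0`. -/
theorem stmt_8 (e₁ e₂ e₃ a b c : ℝ)
    (he₁ : e₁ = 1 ∨ e₁ = -1) (he₂ : e₂ = 1 ∨ e₂ = -1) (he₃ : e₃ = 1 ∨ e₃ = -1) :
    IsPolyKnot (C e₁ * X ^ 2 + C a * X) (C e₂ * X ^ 3 + C b * X) (C e₃ * X ^ 4 + C c * X) ↔
      (0 < 3 * a ^ 2 + 4 * e₂ * b ∨ e₁ * a ^ 3 + 2 * e₁ * e₂ * a * b + e₃ * c ≠ 0) := by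
  have h1 : e₁ * e₁ = 1 := by rcases he₁ with h | h <;> rw [h] <;> norm_num
  have h2 : e₂ * e₂ = 1 := by rcases he₂ with h | h <;> rw [h] <;> norm_num
  have h3 : e₃ * e₃ = 1 := by rcases he₃ with h | h <;> rw [h] <;> norm_num
  have hev1 : ∀ u : ℝ, (C e₁ * X ^ 2 + C a * X).eval u = e₁ * u ^ 2 + a * u := by
    intro u; simp
  have hev2 : ∀ u : ℝ, (C e₂ * X ^ 3 + C b * X).eval u = e₂ * u ^ 3 + b * u := by
    intro u; simp
  have hev3 : ∀ u : ℝ, (C e₃ * X ^ 4 + C c * X).eval u = e₃ * u ^ 4 + c * u := by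
    intro u; simp
  have hde1 : ∀ u : ℝ, (derivative (C e₁ * X ^ 2 + C a * X)).eval u = 2 * e₁ * u + a := by
    intro u; simp; ring
  have hde2 : ∀ u : ℝ, (derivative (C e₂ * X ^ 3 + C b * X)).eval u = 3 * e₂ * u ^ 2 + b := by
    intro u; simp; ring
  have hde3 : ∀ u : ℝ, (derivative (C e₃ * X ^ 4 + C c * X)).eval u = 4 * e₃ * u ^ 3 + c := by
    intro u; simp; ring
  constructor
  · rintro ⟨hinj, hder⟩
    by_contra hcon
    push_neg at hcon
    obtain ⟨hQle, hE⟩ := hcon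
    rcases eq_or_lt_of_le hQle with hQ | hQlt
    · -- discriminant is zero: the derivative vanishes at t₀ = -e₁a/2
      have hQ' : 3 * a ^ 2 + 4 * e₂ * b = 0 := hQ
      refine hder (-(e₁ * a) / 2) ?_
      rw [hde1, hde2, hde3, Prod.mk.injEq, Prod.mk.injEq]
      refine ⟨?_, ?_, ?_⟩
      · linear_combination (-a) * h1
      · linear_combination (e₂ / 4) * hQ' + (3 * e₂ * a ^ 2 / 4) * h1 + (-b) * h2
      · linear_combination e₃ * hE + (-c) * h3 + (-(e₁ * e₃ * a) / 2) * hQ' +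
          (-(e₁ * e₃ * a ^ 3) / 2) * h1
    · -- negative of the discriminant condition: the map is not injective
      set r := Real.sqrt (-(3 * a ^ 2 + 4 * e₂ * b)) with hrdef
      have hrpos : 0 < r := Real.sqrt_pos.mpr (by linarith)
      have hr : r * r = -(3 * a ^ 2 + 4 * e₂ * b) := Real.mul_self_sqrt (by linarith)
      have hne : (-(e₁ * a) + r) / 2 ≠ (-(e₁ * a) - r) / 2 := by
        intro h
        linarith
      refine hne (hinj ?_)
      simp only [hev1, hev2, hev3, Prod.mk.injEq]
      refine ⟨?_, ?_, ?_⟩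
      · linear_combination (-(a * r)) * h1
      · linear_combination (e₂ * r / 4) * hr + (3 * e₂ * a ^ 2 * r / 4) * h1 + (-(b * r)) * h2
      · linear_combination (-(e₁ * e₃ * a * r) / 2) * hr + (e₃ * r) * hE +
          (-(e₁ * e₃ * a ^ 3 * r) / 2) * h1 + (-(c * r)) * h3
  · intro hR
    constructor
    · intro s t hst
      by_contra hne
      have hst' : (e₁ * s ^ 2 + a * s, e₂ * s ^ 3 + b * s, e₃ * s ^ 4 + c * s)
          = (e₁ * t ^ 2 + a * t, e₂ * t ^ 3 + b * t, e₃ * t ^ 4 + c * t) := by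
        simpa only [hev1, hev2, hev3] using hst
      rw [Prod.mk.injEq, Prod.mk.injEq] at hst'
      obtain ⟨eq1, eq2, eq3⟩ := hst'
      have hd : s - t ≠ 0 := sub_ne_zero.mpr hne
      have hsum : e₁ * (s + t) + a = 0 := by
        have h := mul_eq_zero.mp (show (s - t) * (e₁ * (s + t) + a) = 0 by
          linear_combination eq1)
        exact h.resolve_left hd
      have hq : e₂ * (s ^ 2 + s * t + t ^ 2) + b = 0 := by
        have h := mul_eq_zero.mp (show (s - t) * (e₂ * (s ^ 2 + s * t + t ^ 2) + b) = 0 by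
          linear_combination eq2)
        exact h.resolve_left hd
      have hc : e₃ * (s + t) * (s ^ 2 + t ^ 2) + c = 0 := by
        have h := mul_eq_zero.mp (show (s - t) * (e₃ * (s + t) * (s ^ 2 + t ^ 2) + c) = 0 by
          linear_combination eq3)
        exact h.resolve_left hd
      have hQ : 3 * a ^ 2 + 4 * e₂ * b = -((s - t) ^ 2) := by
        linear_combination (3 * (a - e₁ * (s + t))) * hsum + (4 * e₂) * hq +
          (3 * (s + t) ^ 2) * h1 + (-(4 * (s ^ 2 + s * t + t ^ 2))) * h2
      have hE0 : e₁ * a ^ 3 + 2 * e₁ * e₂ * a * b + e₃ * c = 0 := by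
        linear_combination e₃ * hc + (2 * e₁ * e₂ * a) * hq +
          (e₁ * a ^ 2 - a * (s + t) - e₁ * (s ^ 2 + t ^ 2)) * hsum +
          (-(a ^ 2 * (s + t)) + (s + t) * (s ^ 2 + t ^ 2)) * h1 +
          (-(2 * e₁ * a * (s ^ 2 + s * t + t ^ 2))) * h2 +
          (-((s + t) * (s ^ 2 + t ^ 2))) * h3
      rcases hR with hR | hR
      · have h4 : (s - t) ^ 2 > 0 := by positivity
        linarith
      · exact hR hE0
    · intro u hu
      have hu' : (2 * e₁ * u + a, 3 * e₂ * u ^ 2 + b, 4 * e₃ * u ^ 3 + c)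
          = ((0 : ℝ), (0 : ℝ), (0 : ℝ)) := by
        simpa only [hde1, hde2, hde3] using hu
      rw [Prod.mk.injEq, Prod.mk.injEq] at hu'
      obtain ⟨d1, d2, d3⟩ := hu'
      rcases hR with hR | hR
      · have hQ0 : 3 * a ^ 2 + 4 * e₂ * b = 0 := by
          linear_combination (3 * (a - 2 * e₁ * u)) * d1 + (4 * e₂) * d2 +
            (12 * u ^ 2) * h1 + (-(12 * u ^ 2)) * h2
        linarith
      · refine hR ?_
        linear_combination e₃ * d3 + (2 * e₁ * e₂ * a) * d2 +
          (e₁ * a ^ 2 - 2 * a * u - 2 * e₁ * u ^ 2) * d1 +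
          (-(2 * a ^ 2 * u) + 4 * u ^ 3) * h1 + (-(6 * e₁ * a * u ^ 2)) * h2 +
          (-(4 * u ^ 3)) * h3
end

section
/- Let e₁, e₂, e₃ ∈ {−1,1} and a, b, c ∈ ℝ be such that the map φ(t) = (e₁t²+at, e₂t³+bt, e₃t⁴+ct) is a polynomial knot. Then φ is joined by a continuous path inside P₄ to at least one of the two polynomial knots t ↦ (0, e₂t, e₃t²) and t ↦ (0, −e₂t, −2e₃t²). -/
open Polynomial

/-- First component polynomial of a tuple in `A₄ ≅ ℝ¹²`, with coefficient tuple
`(a₀, a₁, a₂, b₀, b₁, b₂, b₃, c₀, c₁, c₂, c₃, c₄)`. -/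
noncomputable def fPoly (x : Fin 12 → ℝ) : Polynomial ℝ :=
  C (x 2) * X ^ 2 + C (x 1) * X + C (x 0)

/-- Second component polynomial of a tuple in `A₄ ≅ ℝ¹²`. -/
noncomputable def gPoly (x : Fin 12 → ℝ) : Polynomial ℝ :=
  C (x 6) * X ^ 3 + C (x 5) * X ^ 2 + C (x 4) * X + C (x 3)

/-- Third component polynomial of a tuple in `A₄ ≅ ℝ¹²`. -/
noncomputable def hPoly (x : Fin 12 → ℝ) : Polynomial ℝ :=
  C (x 11) * X ^ 4 + C (x 10) * X ^ 3 + C (x 9) * X ^ 2 + C (x 8) * X + C (x 7)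

/-- The set `P₄ ⊆ A₄ ≅ ℝ¹²` of tuples defining a polynomial knot `(f, g, h)` with
`deg f < deg g < deg h ≤ 4`. -/
def P4 : Set (Fin 12 → ℝ) :=
  {x | IsPolyKnot (fPoly x) (gPoly x) (hPoly x) ∧
    (fPoly x).natDegree < (gPoly x).natDegree ∧
    (gPoly x).natDegree < (hPoly x).natDegree ∧ (hPoly x).natDegree ≤ 4}

/-- The set `P̃₄ ⊆ A₄ ≅ ℝ¹²` of tuples defining a polynomial knot `(f, g, h)` with
`deg f = 2`, `deg g = 3`, `deg h = 4`. -/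
def Pt4 : Set (Fin 12 → ℝ) :=
  {x | IsPolyKnot (fPoly x) (gPoly x) (hPoly x) ∧
    (fPoly x).natDegree = 2 ∧ (gPoly x).natDegree = 3 ∧ (hPoly x).natDegree = 4}

/- ===== auxiliary definitions and lemmas ===== -/

/-- The coefficient tuple of the knot `(e₁t²+at, e₂t³+bt, e₃t⁴+ct)`. -/
def vv (e₁ e₂ e₃ a b c : ℝ) : Fin 12 → ℝ := ![0, a, e₁, 0, b, 0, e₂, 0, c, 0, 0, e₃]

/-- The coefficient tuple of `(k₁t², k₂t³+e₂t, k₄t⁴+k₃t²)`. -/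
def ww (e₂ k₁ k₂ k₃ k₄ : ℝ) : Fin 12 → ℝ := ![0, 0, k₁, 0, e₂, 0, k₂, 0, 0, k₃, 0, k₄]

section evals

variable (e₁ e₂ e₃ a b c k₁ k₂ k₃ k₄ t : ℝ)

lemma fPoly_vv : fPoly (vv e₁ e₂ e₃ a b c) = C e₁ * X ^ 2 + C a * X + C 0 := rfl
lemma gPoly_vv : gPoly (vv e₁ e₂ e₃ a b c) = C e₂ * X ^ 3 + C 0 * X ^ 2 + C b * X + C 0 := rfl
lemma hPoly_vv : hPoly (vv e₁ e₂ e₃ a b c) =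
    C e₃ * X ^ 4 + C 0 * X ^ 3 + C 0 * X ^ 2 + C c * X + C 0 := rfl
lemma fPoly_ww : fPoly (ww e₂ k₁ k₂ k₃ k₄) = C k₁ * X ^ 2 + C 0 * X + C 0 := rfl
lemma gPoly_ww : gPoly (ww e₂ k₁ k₂ k₃ k₄) = C k₂ * X ^ 3 + C 0 * X ^ 2 + C e₂ * X + C 0 := rfl
lemma hPoly_ww : hPoly (ww e₂ k₁ k₂ k₃ k₄) =
    C k₄ * X ^ 4 + C 0 * X ^ 3 + C k₃ * X ^ 2 + C 0 * X + C 0 := rfl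

lemma vfe : (fPoly (vv e₁ e₂ e₃ a b c)).eval t = e₁*t^2 + a*t := by rw [fPoly_vv]; simp
lemma vge : (gPoly (vv e₁ e₂ e₃ a b c)).eval t = e₂*t^3 + b*t := by rw [gPoly_vv]; simp
lemma vhe : (hPoly (vv e₁ e₂ e₃ a b c)).eval t = e₃*t^4 + c*t := by rw [hPoly_vv]; simp
lemma vfd : (derivative (fPoly (vv e₁ e₂ e₃ a b c))).eval t = 2*e₁*t + a := by
  rw [fPoly_vv]; simp; ring
lemma vgd : (derivative (gPoly (vv e₁ e₂ e₃ a b c))).eval t = 3*e₂*t^2 + b := by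
  rw [gPoly_vv]; simp; ring
lemma vhd : (derivative (hPoly (vv e₁ e₂ e₃ a b c))).eval t = 4*e₃*t^3 + c := by
  rw [hPoly_vv]; simp; ring
lemma wge : (gPoly (ww e₂ k₁ k₂ k₃ k₄)).eval t = k₂*t^3 + e₂*t := by rw [gPoly_ww]; simp
lemma wgd : (derivative (gPoly (ww e₂ k₁ k₂ k₃ k₄))).eval t = 3*k₂*t^2 + e₂ := by
  rw [gPoly_ww]; simp; ring

lemma sfe : (C e₁ * X ^ 2 + C a * X).eval t = e₁*t^2 + a*t := by simp
lemma sge : (C e₂ * X ^ 3 + C b * X).eval t = e₂*t^3 + b*t := by simp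
lemma she : (C e₃ * X ^ 4 + C c * X).eval t = e₃*t^4 + c*t := by simp
lemma sfd : (derivative (C e₁ * X ^ 2 + C a * X)).eval t = 2*e₁*t + a := by simp; ring
lemma sgd : (derivative (C e₂ * X ^ 3 + C b * X)).eval t = 3*e₂*t^2 + b := by simp; ring
lemma shd : (derivative (C e₃ * X ^ 4 + C c * X)).eval t = 4*e₃*t^3 + c := by simp; ring

lemma fP_le (x : Fin 12 → ℝ) : (fPoly x).natDegree ≤ 2 := by unfold fPoly; compute_degree
lemma gP_le (x : Fin 12 → ℝ) : (gPoly x).natDegree ≤ 3 := by unfold gPoly; compute_degree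
lemma hP_le (x : Fin 12 → ℝ) : (hPoly x).natDegree ≤ 4 := by unfold hPoly; compute_degree

lemma gP_c3 (x : Fin 12 → ℝ) : (gPoly x).coeff 3 = x 6 := by
  unfold gPoly; simp [coeff_add, coeff_C_mul, coeff_X_pow, coeff_C, coeff_X]
lemma gP_c1 (x : Fin 12 → ℝ) : (gPoly x).coeff 1 = x 4 := by
  unfold gPoly; simp [coeff_add, coeff_C_mul, coeff_X_pow, coeff_C, coeff_X]
lemma hP_c4 (x : Fin 12 → ℝ) : (hPoly x).coeff 4 = x 11 := by
  unfold hPoly; simp [coeff_add, coeff_C_mul, coeff_X_pow, coeff_C, coeff_X]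
lemma hP_c2 (x : Fin 12 → ℝ) : (hPoly x).coeff 2 = x 9 := by
  unfold hPoly; simp [coeff_add, coeff_C_mul, coeff_X_pow, coeff_C, coeff_X]

end evals

lemma isPolyKnot_of (f g h : Polynomial ℝ)
    (hinj : ∀ t s : ℝ, f.eval t = f.eval s → g.eval t = g.eval s → h.eval t = h.eval s → t = s)
    (hreg : ∀ t : ℝ, ¬((derivative f).eval t = 0 ∧ (derivative g).eval t = 0 ∧
      (derivative h).eval t = 0)) : IsPolyKnot f g h := by
  constructor
  · intro t s hts
    simp only [Prod.mk.injEq] at hts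
    exact hinj t s hts.1 hts.2.1 hts.2.2
  · intro t h'
    simp only [Prod.mk.injEq] at h'
    exact hreg t ⟨h'.1, h'.2.1, h'.2.2⟩

lemma cubic_inj {k t s : ℝ} (hk : 0 ≤ k) (h : k*t^3 + t = k*s^3 + s) : t = s := by
  have hq : (0:ℝ) ≤ t^2 + t*s + s^2 := by nlinarith [sq_nonneg (t+s), sq_nonneg t, sq_nonneg s]
  have h2 : (t - s) * (k*(t^2 + t*s + s^2) + 1) = 0 := by linear_combination h
  have h3 : 0 < k*(t^2+t*s+s^2) + 1 := by nlinarith [mul_nonneg hk hq]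
  rcases mul_eq_zero.mp h2 with h4 | h4
  · linarith [sub_eq_zero.mp h4]
  · linarith

lemma convex_pos {A B v : ℝ} (hA : 0 < A) (hB : 0 < B) (hv0 : 0 ≤ v) (hv1 : v ≤ 1) :
    0 < (1-v)*A + v*B := by
  rcases le_or_gt v (1/2) with h|h
  · nlinarith
  · nlinarith

/-- Membership of the basic family in `P4`. -/
lemma memP4_v (e₁ e₂ e₃ a b c : ℝ) (h1 : e₁*e₁ = 1) (h2 : e₂*e₂ = 1) (h3 : e₃*e₃ = 1)
    (hcond : 0 < 3*a^2 + 4*(e₂*b) ∨ c ≠ -(e₁*e₃*a*(a^2+2*(e₂*b)))) :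
    vv e₁ e₂ e₃ a b c ∈ P4 := by
  have he₂0 : e₂ ≠ 0 := by intro h; rw [h] at h2; norm_num at h2
  have he₃0 : e₃ ≠ 0 := by intro h; rw [h] at h3; norm_num at h3
  refine ⟨isPolyKnot_of _ _ _ ?_ ?_, ?_, ?_, hP_le _⟩
  · intro t s hf hg hh
    rw [vfe, vfe] at hf
    rw [vge, vge] at hg
    rw [vhe, vhe] at hh
    by_contra hts
    have hne : t - s ≠ 0 := sub_ne_zero.mpr hts
    have k1 : e₁*(t+s) + a = 0 := by
      have h' : (t-s) * (e₁*(t+s) + a) = 0 := by linear_combination hf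
      exact (mul_eq_zero.mp h').resolve_left hne
    have k2 : e₂*(t^2+t*s+s^2) + b = 0 := by
      have h' : (t-s) * (e₂*(t^2+t*s+s^2) + b) = 0 := by linear_combination hg
      exact (mul_eq_zero.mp h').resolve_left hne
    have k3 : e₃*(t+s)*(t^2+s^2) + c = 0 := by
      have h' : (t-s) * (e₃*(t+s)*(t^2+s^2) + c) = 0 := by linear_combination hh
      exact (mul_eq_zero.mp h').resolve_left hne
    have ha2 : a^2 = (t+s)^2 := by linear_combination (a - e₁*(t+s))*k1 + (t+s)^2*h1
    have hb : e₂*b = -(t^2+t*s+s^2) := by linear_combination e₂*k2 - (t^2+t*s+s^2)*h2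
    have hX : 3*a^2 + 4*(e₂*b) = -((t-s)^2) := by linear_combination 3*ha2 + 4*hb
    have hF : c = -(e₁*e₃*a*(a^2+2*(e₂*b))) := by
      linear_combination k3 + (e₁*e₃*a)*ha2 + (2*e₁*e₃*a)*hb
        + (e₁*e₃*((t+s)^2 - 2*(t^2+t*s+s^2)))*k1 + (e₃*(t+s)*(t^2+s^2))*h1
    rcases hcond with hpos | hnec
    · have hq : 0 < (t-s)^2 := by positivity
      linarith
    · exact hnec hF
  · rintro t ⟨d1, d2, d3⟩
    rw [vfd] at d1
    rw [vgd] at d2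
    rw [vhd] at d3
    have ha2 : a^2 = 4*t^2 := by linear_combination (a - 2*e₁*t)*d1 + 4*t^2*h1
    have hb : e₂*b = -(3*t^2) := by linear_combination e₂*d2 - 3*t^2*h2
    have hX : 3*a^2 + 4*(e₂*b) = 0 := by linear_combination 3*ha2 + 4*hb
    have hF : c = -(e₁*e₃*a*(a^2+2*(e₂*b))) := by
      linear_combination d3 + (e₁*e₃*a)*ha2 + (2*e₁*e₃*a)*hb
        - (2*e₁*e₃*t^2)*d1 + (4*e₃*t^3)*h1
    rcases hcond with hpos | hnec
    · linarith
    · exact hnec hF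
  · have hc3 : (gPoly (vv e₁ e₂ e₃ a b c)).coeff 3 = e₂ := by rw [gP_c3]; rfl
    have h3le : 3 ≤ (gPoly (vv e₁ e₂ e₃ a b c)).natDegree :=
      le_natDegree_of_ne_zero (by rw [hc3]; exact he₂0)
    exact lt_of_le_of_lt (fP_le _) (lt_of_lt_of_le (by norm_num) h3le)
  · have hc4 : (hPoly (vv e₁ e₂ e₃ a b c)).coeff 4 = e₃ := by rw [hP_c4]; rfl
    have h4le : 4 ≤ (hPoly (vv e₁ e₂ e₃ a b c)).natDegree :=
      le_natDegree_of_ne_zero (by rw [hc4]; exact he₃0)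
    exact lt_of_le_of_lt (gP_le _) (lt_of_lt_of_le (by norm_num) h4le)

/-- Membership in `P4` for the second family, given degree conditions. -/
lemma memP4_w (e₂ k₁ k₂ k₃ k₄ : ℝ) (h2 : e₂*e₂ = 1) (hk : 0 ≤ e₂*k₂)
    (hfg : (fPoly (ww e₂ k₁ k₂ k₃ k₄)).natDegree < (gPoly (ww e₂ k₁ k₂ k₃ k₄)).natDegree)
    (hgh : (gPoly (ww e₂ k₁ k₂ k₃ k₄)).natDegree < (hPoly (ww e₂ k₁ k₂ k₃ k₄)).natDegree) :
    ww e₂ k₁ k₂ k₃ k₄ ∈ P4 := by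
  refine ⟨isPolyKnot_of _ _ _ ?_ ?_, hfg, hgh, hP_le _⟩
  · intro t s _ hg _
    rw [wge, wge] at hg
    have h' : (e₂*k₂)*t^3 + t = (e₂*k₂)*s^3 + s := by
      linear_combination e₂*hg - (t-s)*h2
    exact cubic_inj hk h'
  · rintro t ⟨_, d2, _⟩
    rw [wgd] at d2
    have h' : 3*(e₂*k₂)*t^2 + 1 = 0 := by linear_combination e₂*d2 - h2
    nlinarith [mul_nonneg hk (sq_nonneg t)]

/-- Affine-coordinatewise paths give `JoinedIn`. -/
lemma joinedIn_of_path {P : Set (Fin 12 → ℝ)} {x y : Fin 12 → ℝ} (γ : ℝ → Fin 12 → ℝ)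
    (hcont : Continuous γ) (h0 : γ 0 = x) (h1 : γ 1 = y)
    (hmem : ∀ s : ℝ, 0 ≤ s → s ≤ 1 → γ s ∈ P) : JoinedIn P x y := by
  refine ⟨⟨⟨fun u => γ u, hcont.comp continuous_subtype_val⟩, ?_, ?_⟩,
    fun t => hmem t t.2.1 t.2.2⟩ <;> simp [h0, h1]

lemma cont_aux (A B : ℝ) : Continuous fun s : ℝ => A + s*B := by fun_prop

lemma deg_fg_w (e₂ k₁ k₂ k₃ k₄ : ℝ) (hk2 : k₂ ≠ 0) :
    (fPoly (ww e₂ k₁ k₂ k₃ k₄)).natDegree < (gPoly (ww e₂ k₁ k₂ k₃ k₄)).natDegree := by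
  have hc3 : (gPoly (ww e₂ k₁ k₂ k₃ k₄)).coeff 3 = k₂ := by rw [gP_c3]; rfl
  have h3le : 3 ≤ (gPoly (ww e₂ k₁ k₂ k₃ k₄)).natDegree :=
    le_natDegree_of_ne_zero (by rw [hc3]; exact hk2)
  exact lt_of_le_of_lt (fP_le _) (lt_of_lt_of_le (by norm_num) h3le)

lemma deg_gh_w (e₂ k₁ k₂ k₃ k₄ : ℝ) (hk4 : k₄ ≠ 0) :
    (gPoly (ww e₂ k₁ k₂ k₃ k₄)).natDegree < (hPoly (ww e₂ k₁ k₂ k₃ k₄)).natDegree := by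
  have hc4 : (hPoly (ww e₂ k₁ k₂ k₃ k₄)).coeff 4 = k₄ := by rw [hP_c4]; rfl
  have h4le : 4 ≤ (hPoly (ww e₂ k₁ k₂ k₃ k₄)).natDegree :=
    le_natDegree_of_ne_zero (by rw [hc4]; exact hk4)
  exact lt_of_le_of_lt (gP_le _) (lt_of_lt_of_le (by norm_num) h4le)

lemma deg_f0_w (e₂ k₂ k₃ k₄ : ℝ) : (fPoly (ww e₂ 0 k₂ k₃ k₄)).natDegree = 0 := by
  rw [fPoly_ww]; simp

lemma deg_fg0_w (e₂ k₂ k₃ k₄ : ℝ) (he₂0 : e₂ ≠ 0) :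
    (fPoly (ww e₂ 0 k₂ k₃ k₄)).natDegree < (gPoly (ww e₂ 0 k₂ k₃ k₄)).natDegree := by
  have hc1 : (gPoly (ww e₂ 0 k₂ k₃ k₄)).coeff 1 = e₂ := by rw [gP_c1]; rfl
  have h1le : 1 ≤ (gPoly (ww e₂ 0 k₂ k₃ k₄)).natDegree :=
    le_natDegree_of_ne_zero (by rw [hc1]; exact he₂0)
  rw [deg_f0_w]
  exact lt_of_lt_of_le (by norm_num) h1le

lemma deg_gh8_w (e₂ k₃ k₄ : ℝ) (hk3 : k₃ ≠ 0) :
    (gPoly (ww e₂ 0 0 k₃ k₄)).natDegree < (hPoly (ww e₂ 0 0 k₃ k₄)).natDegree := by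
  have hg1 : (gPoly (ww e₂ 0 0 k₃ k₄)).natDegree ≤ 1 := by
    have hg : gPoly (ww e₂ 0 0 k₃ k₄) = C e₂ * X := by rw [gPoly_ww]; simp
    rw [hg]; compute_degree
  have hc2 : (hPoly (ww e₂ 0 0 k₃ k₄)).coeff 2 = k₃ := by rw [hP_c2]; rfl
  have h2le : 2 ≤ (hPoly (ww e₂ 0 0 k₃ k₄)).natDegree :=
    le_natDegree_of_ne_zero (by rw [hc2]; exact hk3)
  exact lt_of_le_of_lt hg1 (lt_of_lt_of_le (by norm_num) h2le)

set_option maxHeartbeats 2000000 in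
/-- If `e₁, e₂, e₃ ∈ {−1,1}` and `a, b, c ∈ ℝ` are such that
`φ(t) = (e₁t²+at, e₂t³+bt, e₃t⁴+ct)` is a polynomial knot, then `φ` is joined by a path
inside `P₄` to one of the knots `t ↦ (0, e₂t, e₃t²)` or `t ↦ (0, −e₂t, −2e₃t²)`. -/
theorem stmt_9 (e₁ e₂ e₃ a b c : ℝ)
    (he₁ : e₁ = 1 ∨ e₁ = -1) (he₂ : e₂ = 1 ∨ e₂ = -1) (he₃ : e₃ = 1 ∨ e₃ = -1)
    (hknot : IsPolyKnot (C e₁ * X ^ 2 + C a * X) (C e₂ * X ^ 3 + C b * X)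
      (C e₃ * X ^ 4 + C c * X)) :
    JoinedIn P4 ![0, a, e₁, 0, b, 0, e₂, 0, c, 0, 0, e₃]
        ![0, 0, 0, 0, e₂, 0, 0, 0, 0, e₃, 0, 0] ∨
    JoinedIn P4 ![0, a, e₁, 0, b, 0, e₂, 0, c, 0, 0, e₃]
        ![0, 0, 0, 0, -e₂, 0, 0, 0, 0, -2 * e₃, 0, 0] := by
  left
  have h1 : e₁*e₁ = 1 := by rcases he₁ with rfl|rfl <;> norm_num
  have h2 : e₂*e₂ = 1 := by rcases he₂ with rfl|rfl <;> norm_num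
  have h3 : e₃*e₃ = 1 := by rcases he₃ with rfl|rfl <;> norm_num
  have he₂0 : e₂ ≠ 0 := by rcases he₂ with rfl|rfl <;> norm_num
  have he₃0 : e₃ ≠ 0 := by rcases he₃ with rfl|rfl <;> norm_num
  have habs1 : |e₁| = 1 := by rcases he₁ with rfl|rfl <;> norm_num
  have habs2 : |e₂| = 1 := by rcases he₂ with rfl|rfl <;> norm_num
  have habs3 : |e₃| = 1 := by rcases he₃ with rfl|rfl <;> norm_num
  have habs13 : |e₁*e₃*a| = |a| := by rw [abs_mul, abs_mul, habs1, habs3]; norm_num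
  -- the starting point satisfies the knot condition
  have hcond : 0 < 3*a^2 + 4*(e₂*b) ∨ c ≠ -(e₁*e₃*a*(a^2+2*(e₂*b))) := by
    by_contra hcon
    push_neg at hcon
    obtain ⟨hle, hceq⟩ := hcon
    rcases eq_or_lt_of_le hle with heq | hlt
    · refine hknot.2 (-(e₁*a)/2) ?_
      simp only [sfd, sgd, shd, Prod.mk.injEq]
      refine ⟨?_, ?_, ?_⟩
      · linear_combination (-(a))*h1
      · linear_combination (3*e₂*a^2/4)*h1 - b*h2 + (e₂/4)*heq
      · linear_combination hceq - (e₁*e₃*a/2)*heq - (e₁*e₃*a^3/2)*h1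
    · have hDnn : (0:ℝ) ≤ -(3*a^2+4*(e₂*b)) := by linarith
      have hD2 : Real.sqrt (-(3*a^2+4*(e₂*b))) ^ 2 = -(3*a^2+4*(e₂*b)) := Real.sq_sqrt hDnn
      have hDpos : 0 < Real.sqrt (-(3*a^2+4*(e₂*b))) := Real.sqrt_pos.mpr (by linarith)
      set D := Real.sqrt (-(3*a^2+4*(e₂*b))) with hDdef
      have himg : (fun u : ℝ => ((C e₁ * X ^ 2 + C a * X).eval u,
            (C e₂ * X ^ 3 + C b * X).eval u, (C e₃ * X ^ 4 + C c * X).eval u))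
            ((-(e₁*a)+D)/2)
          = (fun u : ℝ => ((C e₁ * X ^ 2 + C a * X).eval u,
            (C e₂ * X ^ 3 + C b * X).eval u, (C e₃ * X ^ 4 + C c * X).eval u))
            ((-(e₁*a)-D)/2) := by
        simp only [sfe, sge, she, Prod.mk.injEq]
        refine ⟨?_, ?_, ?_⟩
        · linear_combination (-(a*D))*h1
        · linear_combination (3*a^2*e₂*D/4)*h1 - (b*D)*h2 + (e₂*D/4)*hD2
        · linear_combination D*hceq - (e₁*e₃*a*D/2)*hD2 - (e₁*e₃*a^3*D/2)*h1
      have heq2 := hknot.1 himg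
      have : D = 0 := by linarith
      linarith
  -- auxiliary quantities for the path
  obtain ⟨F₀, hF₀def⟩ : ∃ x : ℝ, x = -(e₁*e₃*a*(a^2+2*(e₂*b))) := ⟨_, rfl⟩
  rw [← hF₀def] at hcond
  obtain ⟨S, hSdef⟩ : ∃ x : ℝ, x = |3*a^2+4*(e₂*b)|/4 + |b| + 1 := ⟨_, rfl⟩
  have hSpos : 0 < S := by rw [hSdef]; positivity
  have hSb : |b| + 1 ≤ S := by rw [hSdef]; linarith [abs_nonneg (3*a^2+4*(e₂*b))]
  obtain ⟨d, hd1, hdcF⟩ : ∃ d : ℝ, (d = 1 ∨ d = -1) ∧ 0 ≤ d*(c - F₀) := by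
    rcases le_or_gt F₀ c with h|h
    · exact ⟨1, Or.inl rfl, by nlinarith⟩
    · exact ⟨-1, Or.inr rfl, by nlinarith⟩
  have hdd : d*d = 1 := by rcases hd1 with h|h <;> rw [h] <;> norm_num
  have hdabs : ∀ z : ℝ, d*z ≤ |z| := by
    intro z
    rcases hd1 with h|h <;> rw [h]
    · rw [one_mul]; exact le_abs_self z
    · nlinarith [neg_abs_le z, abs_nonneg z]
  obtain ⟨M, hMdef⟩ : ∃ x : ℝ, x = |F₀| + 2 * (|a| * S) := ⟨_, rfl⟩
  have hMF : |F₀| ≤ M := by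
    rw [hMdef]; nlinarith [mul_nonneg (abs_nonneg a) hSpos.le]
  obtain ⟨c', hc'def⟩ : ∃ x : ℝ, x = d*(M + |c| + 1) := ⟨_, rfl⟩
  have hdc' : d*c' = M + |c| + 1 := by rw [hc'def]; linear_combination (M + |c| + 1)*hdd
  obtain ⟨b', hb'def⟩ : ∃ x : ℝ, x = b + e₂*S := ⟨_, rfl⟩
  have heb' : e₂*b' = e₂*b + S := by rw [hb'def]; linear_combination S*h2
  have hebb : -|b| ≤ e₂*b := by
    have h' := neg_abs_le (e₂*b)
    have h'' : |e₂*b| = |b| := by rw [abs_mul, habs2, one_mul]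
    linarith
  have heb'1 : 1 ≤ e₂*b' := by linarith
  have hB : 0 < d*(c' - F₀) := by
    have h6 := hdabs F₀
    have h7 : d*(c'-F₀) = d*c' - d*F₀ := by ring
    rw [h7, hdc']; linarith [abs_nonneg c]
  -- segment 1 : move c to c'
  have seg1 : JoinedIn P4 (vv e₁ e₂ e₃ a b c) (vv e₁ e₂ e₃ a b c') := by
    refine joinedIn_of_path (fun v => vv e₁ e₂ e₃ a b (c + v*(c'-c))) ?_ (by norm_num)
      (by show vv e₁ e₂ e₃ a b (c + 1*(c'-c)) = _
          have h : c + 1*(c'-c) = c' := by ring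
          rw [h]) ?_
    · refine continuous_pi fun i => ?_
      fin_cases i <;> first
        | exact continuous_const
        | exact cont_aux _ _
    · intro v hv0 hv1
      refine memP4_v _ _ _ _ _ _ h1 h2 h3 ?_
      rcases hcond with hpos | hne
      · exact Or.inl hpos
      · right
        rw [← hF₀def]
        have hA : 0 < d*(c - F₀) := by
          rcases hdcF.lt_or_eq with h|h
          · exact h
          · exfalso; apply hne; rcases hd1 with hd'|hd' <;> rw [hd'] at h <;> linarith
        intro heqv
        have hz : d*((c + v*(c'-c)) - F₀) = (1-v)*(d*(c-F₀)) + v*(d*(c'-F₀)) := by ring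
        rw [heqv] at hz
        have hz2 : (0:ℝ) = (1-v)*(d*(c-F₀)) + v*(d*(c'-F₀)) := by rw [← hz]; ring
        linarith [convex_pos hA hB hv0 hv1]
  -- segment 2 : move b to b'
  have seg2 : JoinedIn P4 (vv e₁ e₂ e₃ a b c') (vv e₁ e₂ e₃ a b' c') := by
    refine joinedIn_of_path (fun u => vv e₁ e₂ e₃ a (b + u*(e₂*S)) c') ?_ (by norm_num)
      (by show vv e₁ e₂ e₃ a (b + 1*(e₂*S)) c' = _
          have h : b + 1*(e₂*S) = b' := by rw [hb'def]; ring
          rw [h]) ?_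
    · refine continuous_pi fun i => ?_
      fin_cases i <;> first
        | exact continuous_const
        | exact cont_aux _ _
    · intro u hu0 hu1
      refine memP4_v _ _ _ _ _ _ h1 h2 h3 (Or.inr ?_)
      have hFu : -(e₁*e₃*a*(a^2+2*(e₂*(b + u*(e₂*S))))) = F₀ - 2*u*S*(e₁*e₃*a) := by
        rw [hF₀def]; linear_combination (-(2*u*S*e₁*e₃*a))*h2
      rw [hFu]
      have hzb : |2*u*S*(e₁*e₃*a)| ≤ 2 * (|a| * S) := by
        rw [abs_mul, habs13,
          abs_of_nonneg (mul_nonneg (by linarith : (0:ℝ) ≤ 2*u) hSpos.le)]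
        nlinarith [mul_nonneg (mul_nonneg (by linarith : (0:ℝ) ≤ 2*S) (abs_nonneg a))
          (by linarith : (0:ℝ) ≤ 1-u)]
      have hFu_le : |F₀ - 2*u*S*(e₁*e₃*a)| ≤ M := by
        have htr := abs_sub F₀ (2*u*S*(e₁*e₃*a))
        rw [hMdef]; linarith
      have h8 : d*(F₀ - 2*u*S*(e₁*e₃*a)) ≤ M := le_trans (hdabs _) hFu_le
      have hgt : 0 < d*(c' - (F₀ - 2*u*S*(e₁*e₃*a))) := by
        have hexp : d*(c' - (F₀ - 2*u*S*(e₁*e₃*a)))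
            = d*c' - d*(F₀ - 2*u*S*(e₁*e₃*a)) := by ring
        rw [hexp, hdc']; linarith [abs_nonneg c]
      intro heqv
      rw [heqv] at hgt
      simp at hgt
  -- segment 3 : move a and c' to 0
  have seg3 : JoinedIn P4 (vv e₁ e₂ e₃ a b' c') (vv e₁ e₂ e₃ 0 b' 0) := by
    refine joinedIn_of_path (fun w => vv e₁ e₂ e₃ (a + w*(-a)) b' (c' + w*(-c'))) ?_
      (by norm_num)
      (by show vv e₁ e₂ e₃ (a + 1*(-a)) b' (c' + 1*(-c')) = _
          have ha0 : a + 1*(-a) = 0 := by ring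
          have hc0 : c' + 1*(-c') = 0 := by ring
          rw [ha0, hc0]) ?_
    · refine continuous_pi fun i => ?_
      fin_cases i <;> first
        | exact continuous_const
        | exact cont_aux _ _
    · intro w hw0 hw1
      refine memP4_v _ _ _ _ _ _ h1 h2 h3 (Or.inl ?_)
      nlinarith [sq_nonneg (a + w*(-a)), heb'1]
  -- segment 4 : move b' to e₂
  have seg4 : JoinedIn P4 (vv e₁ e₂ e₃ 0 b' 0) (vv e₁ e₂ e₃ 0 e₂ 0) := by
    refine joinedIn_of_path (fun z => vv e₁ e₂ e₃ 0 (b' + z*(e₂ - b')) 0) ?_ (by norm_num)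
      (by show vv e₁ e₂ e₃ 0 (b' + 1*(e₂ - b')) 0 = _
          have h : b' + 1*(e₂ - b') = e₂ := by ring
          rw [h]) ?_
    · refine continuous_pi fun i => ?_
      fin_cases i <;> first
        | exact continuous_const
        | exact cont_aux _ _
    · intro z hz0 hz1
      refine memP4_v _ _ _ _ _ _ h1 h2 h3 (Or.inl ?_)
      have hrew : e₂*(b' + z*(e₂ - b')) = e₂*b' + z - z*(e₂*b') := by
        linear_combination z*h2
      nlinarith [hrew, heb'1, mul_nonneg (by linarith : (0:ℝ) ≤ 1-z)
        (by linarith : (0:ℝ) ≤ e₂*b' - 1)]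
  -- segment 5 : add e₃t² to h
  have seg5 : JoinedIn P4 (vv e₁ e₂ e₃ 0 e₂ 0) (ww e₂ e₁ e₂ e₃ e₃) := by
    refine joinedIn_of_path (fun u => ww e₂ e₁ e₂ (0 + u*e₃) e₃) ?_
      (by show ww e₂ e₁ e₂ (0 + 0*e₃) e₃ = _
          have h : (0:ℝ) + 0*e₃ = 0 := by ring
          rw [h]
          rfl)
      (by show ww e₂ e₁ e₂ (0 + 1*e₃) e₃ = _
          have h : (0:ℝ) + 1*e₃ = e₃ := by ring
          rw [h]) ?_
    · refine continuous_pi fun i => ?_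
      fin_cases i <;> first
        | exact continuous_const
        | exact cont_aux _ _
    · intro u hu0 hu1
      exact memP4_w _ _ _ _ _ h2 (by nlinarith [h2]) (deg_fg_w _ _ _ _ _ he₂0)
        (deg_gh_w _ _ _ _ _ he₃0)
  -- segment 6 : remove the quadratic term of f
  have seg6 : JoinedIn P4 (ww e₂ e₁ e₂ e₃ e₃) (ww e₂ 0 e₂ e₃ e₃) := by
    refine joinedIn_of_path (fun u => ww e₂ (e₁ + u*(-e₁)) e₂ e₃ e₃) ?_ (by norm_num)
      (by show ww e₂ (e₁ + 1*(-e₁)) e₂ e₃ e₃ = _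
          have h : e₁ + 1*(-e₁) = 0 := by ring
          rw [h]) ?_
    · refine continuous_pi fun i => ?_
      fin_cases i <;> first
        | exact continuous_const
        | exact cont_aux _ _
    · intro u hu0 hu1
      exact memP4_w _ _ _ _ _ h2 (by nlinarith [h2]) (deg_fg_w _ _ _ _ _ he₂0)
        (deg_gh_w _ _ _ _ _ he₃0)
  -- segment 7 : remove the cubic term of g
  have seg7 : JoinedIn P4 (ww e₂ 0 e₂ e₃ e₃) (ww e₂ 0 0 e₃ e₃) := by
    refine joinedIn_of_path (fun u => ww e₂ 0 (e₂ + u*(-e₂)) e₃ e₃) ?_ (by norm_num)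
      (by show ww e₂ 0 (e₂ + 1*(-e₂)) e₃ e₃ = _
          have h : e₂ + 1*(-e₂) = 0 := by ring
          rw [h]) ?_
    · refine continuous_pi fun i => ?_
      fin_cases i <;> first
        | exact continuous_const
        | exact cont_aux _ _
    · intro u hu0 hu1
      have hk : 0 ≤ e₂*(e₂ + u*(-e₂)) := by
        have hke : e₂*(e₂ + u*(-e₂)) = 1 - u := by linear_combination (1-u)*h2
        linarith
      exact memP4_w _ _ _ _ _ h2 hk (deg_fg0_w _ _ _ _ he₂0) (deg_gh_w _ _ _ _ _ he₃0)
  -- segment 8 : remove the quartic term of h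
  have seg8 : JoinedIn P4 (ww e₂ 0 0 e₃ e₃) (ww e₂ 0 0 e₃ 0) := by
    refine joinedIn_of_path (fun u => ww e₂ 0 0 e₃ (e₃ + u*(-e₃))) ?_ (by norm_num)
      (by show ww e₂ 0 0 e₃ (e₃ + 1*(-e₃)) = _
          have h : e₃ + 1*(-e₃) = 0 := by ring
          rw [h]) ?_
    · refine continuous_pi fun i => ?_
      fin_cases i <;> first
        | exact continuous_const
        | exact cont_aux _ _
    · intro u hu0 hu1
      exact memP4_w _ _ _ _ _ h2 (by simp) (deg_fg0_w _ _ _ _ he₂0)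
        (deg_gh8_w _ _ _ he₃0)
  exact (((((((seg1.trans seg2).trans seg3).trans seg4).trans seg5).trans seg6).trans
    seg7).trans seg8)
end

section
/- For every φ ∈ P̃₄ there exist e₁, e₂, e₃ ∈ {−1,1} and a, b, c ∈ ℝ such that the map ψ(t) = (e₁t²+at, e₂t³+bt, e₃t⁴+ct) is a polynomial knot and φ and ψ are joined by a continuous path inside P̃₄. -/
/-!
Membership in `P̃₄` only depends on the knot property and on the three leading coefficients, and
composing a polynomial knot with an affine automorphism of `ℝ³` with triangular linear part gives
again a polynomial knot. A shear removes the `t²` term of `g` and the `t³`, `t²` terms of `h`,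
translations remove the constant terms, and rescaling by the inverse absolute values of the leading
coefficients turns those into `±1`. Interpolating linearly between the identity and this
transformation keeps the diagonal positive, so the straight segment from `φ` to the normal form
stays in `P̃₄`.
-/

open Polynomial

namespace IsPolyKnot

theorem triangular {f g h : ℝ[X]} (hk : IsPolyKnot f g h) {α β γ : ℝ} (hα : α ≠ 0)
    (hβ : β ≠ 0) (hγ : γ ≠ 0) (p q r c₁ c₂ c₃ : ℝ) :
    IsPolyKnot (C α * f + C c₁) (C β * g + C p * f + C c₂)
      (C γ * h + C q * g + C r * f + C c₃) := by
  constructor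
  · intro t₁ t₂ heq
    simp only [eval_add, eval_mul, eval_C, Prod.mk.injEq] at heq
    obtain ⟨ef, eg, eh⟩ := heq
    have hf : f.eval t₁ = f.eval t₂ := mul_left_cancel₀ hα (by linarith)
    have hg : g.eval t₁ = g.eval t₂ := mul_left_cancel₀ hβ (by rw [hf] at eg; linarith)
    have hh : h.eval t₁ = h.eval t₂ := mul_left_cancel₀ hγ (by rw [hf, hg] at eh; linarith)
    exact hk.1 (by simp only [hf, hg, hh])
  · intro t h0
    simp only [derivative_add, derivative_C_mul, derivative_C, add_zero, eval_add, eval_mul,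
      eval_C, Prod.mk.injEq] at h0
    obtain ⟨df, dg, dh⟩ := h0
    have hf : f.derivative.eval t = 0 := (mul_eq_zero.1 df).resolve_left hα
    have hg : g.derivative.eval t = 0 :=
      (mul_eq_zero.1 (by simpa [hf] using dg)).resolve_left hβ
    have hh : h.derivative.eval t = 0 :=
      (mul_eq_zero.1 (by simpa [hf, hg] using dh)).resolve_left hγ
    exact hk.2 t (by simp only [hf, hg, hh])

end IsPolyKnot

theorem Polynomial.natDegree_eq_iff_coeff_ne_zero {R : Type*} [Semiring R] {p : R[X]} {n : ℕ}
    (hn : n ≠ 0) (hp : p.natDegree ≤ n) : p.natDegree = n ↔ p.coeff n ≠ 0 := by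
  refine ⟨fun h => ?_, natDegree_eq_of_le_of_coeff_ne_zero hp⟩
  rw [← h, coeff_natDegree, leadingCoeff_ne_zero]
  rintro rfl
  exact hn (by simpa using h.symm)

theorem mem_Pt4_iff {x : Fin 12 → ℝ} :
    x ∈ Pt4 ↔ IsPolyKnot (fPoly x) (gPoly x) (hPoly x) ∧ x 2 ≠ 0 ∧ x 6 ≠ 0 ∧ x 11 ≠ 0 := by
  have hf : (fPoly x).natDegree = 2 ↔ x 2 ≠ 0 := by
    rw [natDegree_eq_iff_coeff_ne_zero two_ne_zero (by unfold fPoly; compute_degree)]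
    simp [fPoly]
  have hg : (gPoly x).natDegree = 3 ↔ x 6 ≠ 0 := by
    rw [natDegree_eq_iff_coeff_ne_zero three_ne_zero (by unfold gPoly; compute_degree)]
    simp [gPoly]
  have hh : (hPoly x).natDegree = 4 ↔ x 11 ≠ 0 := by
    rw [natDegree_eq_iff_coeff_ne_zero four_ne_zero (by unfold hPoly; compute_degree)]
    simp [hPoly]
  simp only [Pt4, Set.mem_ofPred_eq, hf, hg, hh]

theorem fPoly_add_smul (x y : Fin 12 → ℝ) (a b : ℝ) :
    fPoly (a • x + b • y) = C a * fPoly x + C b * fPoly y := by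
  simp only [fPoly, Pi.add_apply, Pi.smul_apply, smul_eq_mul, map_add, map_mul]
  ring

theorem gPoly_add_smul (x y : Fin 12 → ℝ) (a b : ℝ) :
    gPoly (a • x + b • y) = C a * gPoly x + C b * gPoly y := by
  simp only [gPoly, Pi.add_apply, Pi.smul_apply, smul_eq_mul, map_add, map_mul]
  ring

theorem hPoly_add_smul (x y : Fin 12 → ℝ) (a b : ℝ) :
    hPoly (a • x + b • y) = C a * hPoly x + C b * hPoly y := by
  simp only [hPoly, Pi.add_apply, Pi.smul_apply, smul_eq_mul, map_add, map_mul]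
  ring

/-- The curve of `y` is that of `x` followed by the affine map
`(u, v, w) ↦ (α u + c₁, β v + p u + c₂, γ w + q v + r u + c₃)` of `ℝ³`. -/
def IsTriangularImage (x y : Fin 12 → ℝ) (α β γ : ℝ) : Prop :=
  ∃ p q r c₁ c₂ c₃ : ℝ, fPoly y = C α * fPoly x + C c₁ ∧
    gPoly y = C β * gPoly x + C p * fPoly x + C c₂ ∧
    hPoly y = C γ * hPoly x + C q * gPoly x + C r * fPoly x + C c₃

namespace IsTriangularImage

variable {x y : Fin 12 → ℝ} {α β γ : ℝ}

theorem mem_Pt4 (hxy : IsTriangularImage x y α β γ) (hx : x ∈ Pt4) (hα : α ≠ 0) (hβ : β ≠ 0)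
    (hγ : γ ≠ 0) : y ∈ Pt4 := by
  obtain ⟨hk, h2, h6, h11⟩ := mem_Pt4_iff.1 hx
  obtain ⟨p, q, r, c₁, c₂, c₃, hf, hg, hh⟩ := hxy
  have hy2 : y 2 = α * x 2 := by simpa [fPoly] using congrArg (coeff · 2) hf
  have hy6 : y 6 = β * x 6 := by simpa [fPoly, gPoly] using congrArg (coeff · 3) hg
  have hy11 : y 11 = γ * x 11 := by
    simpa [fPoly, gPoly, hPoly] using congrArg (coeff · 4) hh
  refine mem_Pt4_iff.2 ⟨?_, ?_, ?_, ?_⟩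
  · rw [hf, hg, hh]
    exact hk.triangular hα hβ hγ p q r c₁ c₂ c₃
  · rw [hy2]; exact mul_ne_zero hα h2
  · rw [hy6]; exact mul_ne_zero hβ h6
  · rw [hy11]; exact mul_ne_zero hγ h11

theorem segment (hxy : IsTriangularImage x y α β γ) (s : ℝ) :
    IsTriangularImage x ((1 - s) • x + s • y) (1 - s + s * α) (1 - s + s * β)
      (1 - s + s * γ) := by
  obtain ⟨p, q, r, c₁, c₂, c₃, hf, hg, hh⟩ := hxy
  refine ⟨s * p, s * q, s * r, s * c₁, s * c₂, s * c₃, ?_, ?_, ?_⟩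
  · rw [fPoly_add_smul, hf]; simp only [map_add, map_mul, map_sub, map_one]; ring
  · rw [gPoly_add_smul, hg]; simp only [map_add, map_mul, map_sub, map_one]; ring
  · rw [hPoly_add_smul, hh]; simp only [map_add, map_mul, map_sub, map_one]; ring

theorem joinedIn_Pt4 (hxy : IsTriangularImage x y α β γ) (hx : x ∈ Pt4) (hα : 0 < α)
    (hβ : 0 < β) (hγ : 0 < γ) : JoinedIn Pt4 x y := by
  have hpos : ∀ s ∈ Set.Icc (0 : ℝ) 1, ∀ δ : ℝ, 0 < δ → 1 - s + s * δ ≠ 0 := by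
    rintro s ⟨hs₀, hs₁⟩ δ hδ
    rcases hs₁.lt_or_eq with hs | rfl
    · nlinarith [mul_nonneg hs₀ hδ.le]
    · simpa using hδ.ne'
  refine JoinedIn.of_segment_subset ?_
  rw [segment_eq_image]
  rintro _ ⟨s, hs, rfl⟩
  exact (hxy.segment s).mem_Pt4 hx (hpos s hs α hα) (hpos s hs β hβ) (hpos s hs γ hγ)

end IsTriangularImage

theorem exists_isTriangularImage_normalForm {x : Fin 12 → ℝ} (h2 : x 2 ≠ 0) (h6 : x 6 ≠ 0)
    (u v w : ℝ) : ∃ a b c : ℝ, IsTriangularImage x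
      ![0, a, u * x 2, 0, b, 0, v * x 6, 0, c, 0, 0, w * x 11] u v w := by
  -- `l`, `m`, `k` cancel the `t²` term of `g` and the `t³`, `t²` terms of `h`
  set l := x 5 / x 2
  set m := x 10 / x 6
  set k := (m * x 5 - x 9) / x 2
  refine ⟨u * x 1, v * (x 4 - l * x 1), w * (x 8 - m * x 4 + k * x 1), -v * l, -w * m, w * k,
    -u * x 0, -v * (x 3 - l * x 0), -w * (x 7 - m * x 3 + k * x 0), ?_, ?_, ?_⟩ <;>
  refine Polynomial.funext fun t => ?_ <;>
  simp only [fPoly, gPoly, hPoly, Matrix.cons_val, Matrix.cons_val_one, Matrix.cons_val_zero,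
    eval_add, eval_mul, eval_C, eval_pow, eval_X, l, m, k] <;>
  field_simp <;>
  ring

theorem inv_abs_mul_self_eq_one_or_neg_one {r : ℝ} (hr : r ≠ 0) :
    |r|⁻¹ * r = 1 ∨ |r|⁻¹ * r = -1 := by
  rcases abs_choice r with h | h <;> rw [h]
  · exact .inl (inv_mul_cancel₀ hr)
  · exact .inr (by rw [inv_neg, neg_mul, inv_mul_cancel₀ hr])

/-- For every `φ ∈ P̃₄` there exist `e₁, e₂, e₃ ∈ {−1,1}` and `a, b, c ∈ ℝ`
such that `ψ(t) = (e₁t²+at, e₂t³+bt, e₃t⁴+ct)` is a polynomial knot and `φ` is joined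
to `ψ` by a path inside `P̃₄`. -/
theorem stmt_10 (x : Fin 12 → ℝ) (hx : x ∈ Pt4) :
    ∃ e₁ e₂ e₃ a b c : ℝ, (e₁ = 1 ∨ e₁ = -1) ∧ (e₂ = 1 ∨ e₂ = -1) ∧ (e₃ = 1 ∨ e₃ = -1) ∧
      IsPolyKnot (C e₁ * X ^ 2 + C a * X) (C e₂ * X ^ 3 + C b * X)
        (C e₃ * X ^ 4 + C c * X) ∧
      JoinedIn Pt4 x ![0, a, e₁, 0, b, 0, e₂, 0, c, 0, 0, e₃] := by
  obtain ⟨-, h2, h6, h11⟩ := mem_Pt4_iff.1 hx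
  obtain ⟨a, b, c, hxy⟩ :=
    exists_isTriangularImage_normalForm h2 h6 |x 2|⁻¹ |x 6|⁻¹ |x 11|⁻¹
  have hy := hxy.mem_Pt4 hx (by positivity) (by positivity) (by positivity)
  refine ⟨_, _, _, a, b, c, inv_abs_mul_self_eq_one_or_neg_one h2,
    inv_abs_mul_self_eq_one_or_neg_one h6, inv_abs_mul_self_eq_one_or_neg_one h11, ?_,
    hxy.joinedIn_Pt4 hx (by positivity) (by positivity) (by positivity)⟩
  simpa [fPoly, gPoly, hPoly] using (mem_Pt4_iff.1 hy).1
end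

section
/- Every polynomial knot φ ∈ P̃₄ is joined by a continuous path inside P₄ to a polynomial knot ψ ∈ P₄ whose first component is a constant polynomial, whose second component has degree 1, and whose third component has degree 2. -/
open Polynomial

/-! ### Auxiliary evaluation lemmas -/

lemma evalF (x : Fin 12 → ℝ) (t : ℝ) : (fPoly x).eval t = x 2 * t^2 + x 1 * t + x 0 := by
  simp [fPoly]
lemma evalG (x : Fin 12 → ℝ) (t : ℝ) :
    (gPoly x).eval t = x 6 * t^3 + x 5 * t^2 + x 4 * t + x 3 := by simp [gPoly]
lemma evalH (x : Fin 12 → ℝ) (t : ℝ) :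
    (hPoly x).eval t = x 11 * t^4 + x 10 * t^3 + x 9 * t^2 + x 8 * t + x 7 := by simp [hPoly]
lemma evalF' (x : Fin 12 → ℝ) (t : ℝ) : ((derivative (fPoly x))).eval t = 2 * x 2 * t + x 1 := by
  simp [fPoly]; ring
lemma evalG' (x : Fin 12 → ℝ) (t : ℝ) :
    ((derivative (gPoly x))).eval t = 3 * x 6 * t^2 + 2 * x 5 * t + x 4 := by simp [gPoly]; ring
lemma evalH' (x : Fin 12 → ℝ) (t : ℝ) :
    ((derivative (hPoly x))).eval t = 4 * x 11 * t^3 + 3 * x 10 * t^2 + 2 * x 9 * t + x 8 := by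
  simp [hPoly]; ring

/-! ### Degree lemmas -/

lemma ndF (x : Fin 12 → ℝ) (h : x 2 ≠ 0) : (fPoly x).natDegree = 2 := by
  unfold fPoly; compute_degree!
lemma ndG (x : Fin 12 → ℝ) (h : x 6 ≠ 0) : (gPoly x).natDegree = 3 := by
  unfold gPoly; compute_degree!
lemma ndH (x : Fin 12 → ℝ) (h : x 11 ≠ 0) : (hPoly x).natDegree = 4 := by
  unfold hPoly; compute_degree!
lemma ndF0 (x : Fin 12 → ℝ) (h1 : x 1 = 0) (h2 : x 2 = 0) : (fPoly x).natDegree = 0 := by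
  unfold fPoly; rw [h1, h2]; simp
lemma ndG1 (x : Fin 12 → ℝ) (h6 : x 6 = 0) (h5 : x 5 = 0) (h4 : x 4 ≠ 0) :
    (gPoly x).natDegree = 1 := by
  unfold gPoly; rw [h6, h5]; simp only [map_zero, zero_mul, zero_add]; compute_degree!
lemma ndH2 (x : Fin 12 → ℝ) (h11 : x 11 = 0) (h10 : x 10 = 0) (h9 : x 9 ≠ 0) :
    (hPoly x).natDegree = 2 := by
  unfold hPoly; rw [h11, h10]; simp only [map_zero, zero_mul, zero_add]; compute_degree!

lemma a2_ne (x : Fin 12 → ℝ) (h : (fPoly x).natDegree = 2) : x 2 ≠ 0 := by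
  intro h0
  have : (fPoly x).natDegree ≤ 1 := by
    unfold fPoly; rw [h0]; simp only [map_zero, zero_mul, zero_add]; compute_degree
  omega
lemma b3_ne (x : Fin 12 → ℝ) (h : (gPoly x).natDegree = 3) : x 6 ≠ 0 := by
  intro h0
  have : (gPoly x).natDegree ≤ 2 := by
    unfold gPoly; rw [h0]; simp only [map_zero, zero_mul, zero_add]; compute_degree
  omega
lemma c4_ne (x : Fin 12 → ℝ) (h : (hPoly x).natDegree = 4) : x 11 ≠ 0 := by
  intro h0
  have : (hPoly x).natDegree ≤ 3 := by
    unfold hPoly; rw [h0]; simp only [map_zero, zero_mul, zero_add]; compute_degree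
  omega

/-! ### The residual condition and knot criteria -/

/-- The residual injectivity/regularity condition for tuples with vanishing linear
coefficient in the first component. -/
def Cond (x : Fin 12 → ℝ) : Prop :=
  ∀ r : ℝ, 0 ≤ r → x 4 + x 6 * r ≠ 0 ∨ x 8 + x 10 * r ≠ 0

lemma knot1 (x : Fin 12 → ℝ) (h1 : x 1 = 0) (h2 : x 2 ≠ 0) (hC : Cond x) :
    IsPolyKnot (fPoly x) (gPoly x) (hPoly x) := by
  constructor
  · intro t s hts
    simp only [Prod.mk.injEq, evalF, evalG, evalH] at hts
    obtain ⟨hf, hg, hh⟩ := hts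
    have hsq : (t - s) * (t + s) = 0 := by
      have h' : x 2 * t^2 = x 2 * s^2 := by linear_combination hf + (s - t) * h1
      have := mul_left_cancel₀ h2 h'
      linear_combination this
    rcases mul_eq_zero.1 hsq with h0 | h0
    · linarith
    · have ht : t = -s := by linarith
      subst ht
      rcases eq_or_ne s 0 with hs | hs
      · rw [hs]; norm_num
      · exfalso
        have hg' : (2 * s) * (x 4 + x 6 * s^2) = 0 := by linear_combination -hg
        have hh' : (2 * s) * (x 8 + x 10 * s^2) = 0 := by linear_combination -hh
        have h2s : (2 : ℝ) * s ≠ 0 := mul_ne_zero two_ne_zero hs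
        rcases hC (s^2) (sq_nonneg s) with h | h
        · exact h ((mul_eq_zero.1 hg').resolve_left h2s)
        · exact h ((mul_eq_zero.1 hh').resolve_left h2s)
  · intro t hts
    simp only [Prod.mk.injEq, evalF', evalG', evalH'] at hts
    obtain ⟨hf, hg, hh⟩ := hts
    rcases eq_or_ne t 0 with ht | ht
    · subst ht
      rcases hC 0 le_rfl with h | h
      · apply h; linear_combination hg
      · apply h; linear_combination hh
    · have hx : x 2 * (2 * t) = 0 := by linear_combination hf - h1
      rcases mul_eq_zero.1 hx with h | h
      · exact h2 h
      · exact ht (by linarith)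

lemma knot2 (x : Fin 12 → ℝ) (h5 : x 5 = 0) (h6 : x 6 = 0) (h4 : x 4 ≠ 0) :
    IsPolyKnot (fPoly x) (gPoly x) (hPoly x) := by
  constructor
  · intro t s hts
    simp only [Prod.mk.injEq, evalF, evalG, evalH] at hts
    obtain ⟨-, hg, -⟩ := hts
    have : x 4 * t = x 4 * s := by linear_combination hg - (t^3 - s^3) * h6 - (t^2 - s^2) * h5
    exact mul_left_cancel₀ h4 this
  · intro t hts
    simp only [Prod.mk.injEq, evalF', evalG', evalH'] at hts
    obtain ⟨-, hg, -⟩ := hts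
    apply h4
    linear_combination hg - 3 * t^2 * h6 - 2 * t * h5

lemma cond_of_knot (x : Fin 12 → ℝ) (h1 : x 1 = 0)
    (hk : IsPolyKnot (fPoly x) (gPoly x) (hPoly x)) : Cond x := by
  intro r hr
  by_contra hcon
  push_neg at hcon
  obtain ⟨hb, hc⟩ := hcon
  rcases eq_or_lt_of_le hr with h0 | h0
  · apply hk.2 0
    simp only [Prod.mk.injEq, evalF', evalG', evalH']
    refine ⟨by linear_combination h1, by linear_combination hb + x 6 * h0,
      by linear_combination hc + x 10 * h0⟩
  · set t := Real.sqrt r with htdef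
    have ht2 : t ^ 2 = r := Real.sq_sqrt hr
    have htpos : 0 < t := Real.sqrt_pos.2 h0
    have : t = -t := by
      apply hk.1
      simp only [Prod.mk.injEq, evalF, evalG, evalH]
      refine ⟨by linear_combination 2 * t * h1, ?_, ?_⟩
      · linear_combination 2 * t * hb + 2 * t * x 6 * ht2
      · linear_combination 2 * t * hc + 2 * t * x 10 * ht2
    linarith

/-! ### Membership criteria for `P4` -/

lemma mem_P4_1 (x : Fin 12 → ℝ) (h1 : x 1 = 0) (h2 : x 2 ≠ 0) (h6 : x 6 ≠ 0)
    (h11 : x 11 ≠ 0) (hC : Cond x) : x ∈ P4 := by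
  refine ⟨knot1 x h1 h2 hC, ?_, ?_, ?_⟩ <;> simp only [ndF x h2, ndG x h6, ndH x h11] <;> norm_num

lemma mem_P4_2 (x : Fin 12 → ℝ) (h1 : x 1 = 0) (h2 : x 2 = 0) (h5 : x 5 = 0) (h6 : x 6 = 0)
    (h4 : x 4 ≠ 0) (h9 : x 9 ≠ 0) (h10 : x 10 = 0) (h11 : x 11 = 0) : x ∈ P4 := by
  refine ⟨knot2 x h5 h6 h4, ?_, ?_, ?_⟩ <;>
    simp only [ndF0 x h1 h2, ndG1 x h6 h5 h4, ndH2 x h11 h10 h9] <;> norm_num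

lemma Pt4_sub_P4 : Pt4 ⊆ P4 := by
  rintro x ⟨hk, d2, d3, d4⟩
  exact ⟨hk, by rw [d2, d3]; norm_num, by rw [d3, d4]; norm_num, by rw [d4]⟩

/-! ### Path helper -/

lemma joinedIn_of_path_s11 {Y : Type*} [TopologicalSpace Y] {s : Set Y} {γ : ℝ → Y}
    (hγ : Continuous γ) (h : ∀ t ∈ Set.Icc (0:ℝ) 1, γ t ∈ s) : JoinedIn s (γ 0) (γ 1) := by
  refine ⟨⟨⟨fun t => γ t, hγ.comp continuous_subtype_val⟩, by simp, by simp⟩,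
    fun t => h t t.2⟩

/-! ### Piece A: parameter translation -/

noncomputable def shiftX (x : Fin 12 → ℝ) (d : ℝ) : Fin 12 → ℝ :=
![x 2*d^2 + x 1*d + x 0,
  2*x 2*d + x 1,
  x 2,
  x 6*d^3 + x 5*d^2 + x 4*d + x 3,
  3*x 6*d^2 + 2*x 5*d + x 4,
  3*x 6*d + x 5,
  x 6,
  x 11*d^4 + x 10*d^3 + x 9*d^2 + x 8*d + x 7,
  4*x 11*d^3 + 3*x 10*d^2 + 2*x 9*d + x 8,
  6*x 11*d^2 + 3*x 10*d + x 9,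
  4*x 11*d + x 10,
  x 11]

lemma fPoly_shift (x : Fin 12 → ℝ) (d : ℝ) : fPoly (shiftX x d) = (fPoly x).comp (X + C d) := by
  apply Polynomial.funext; intro t
  show (C (x 2) * X ^ 2 + C (2*x 2*d + x 1) * X + C (x 2*d^2 + x 1*d + x 0)).eval t = _
  simp [fPoly, eval_comp]; ring

lemma gPoly_shift (x : Fin 12 → ℝ) (d : ℝ) : gPoly (shiftX x d) = (gPoly x).comp (X + C d) := by
  apply Polynomial.funext; intro t
  show (C (x 6) * X ^ 3 + C (3*x 6*d + x 5) * X ^ 2 + C (3*x 6*d^2 + 2*x 5*d + x 4) * X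
      + C (x 6*d^3 + x 5*d^2 + x 4*d + x 3)).eval t = _
  simp [gPoly, eval_comp]; ring

lemma hPoly_shift (x : Fin 12 → ℝ) (d : ℝ) : hPoly (shiftX x d) = (hPoly x).comp (X + C d) := by
  apply Polynomial.funext; intro t
  show (C (x 11) * X ^ 4 + C (4*x 11*d + x 10) * X ^ 3 + C (6*x 11*d^2 + 3*x 10*d + x 9) * X ^ 2
      + C (4*x 11*d^3 + 3*x 10*d^2 + 2*x 9*d + x 8) * X
      + C (x 11*d^4 + x 10*d^3 + x 9*d^2 + x 8*d + x 7)).eval t = _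
  simp [hPoly, eval_comp]; ring

lemma isPolyKnot_shift {f g h : ℝ[X]} (hk : IsPolyKnot f g h) (d : ℝ) :
    IsPolyKnot (f.comp (X + C d)) (g.comp (X + C d)) (h.comp (X + C d)) := by
  constructor
  · intro t s hts
    simp only [eval_comp, eval_add, eval_X, eval_C] at hts
    have := hk.1 hts
    linarith
  · intro t hts
    apply hk.2 (t + d)
    have e : ∀ p : ℝ[X], (derivative (p.comp (X + C d))).eval t = (derivative p).eval (t + d) := by
      intro p; simp [derivative_comp]
    rw [← e, ← e, ← e]
    exact hts

lemma natDegree_shift (p : ℝ[X]) (d : ℝ) : (p.comp (X + C d)).natDegree = p.natDegree := by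
  simp [natDegree_comp]

lemma pieceA (x : Fin 12 → ℝ) (hx : x ∈ Pt4) : ∃ z ∈ Pt4, z 1 = 0 ∧ JoinedIn P4 x z := by
  obtain ⟨hk, d2, d3, d4⟩ := hx
  have ha2 : x 2 ≠ 0 := a2_ne x d2
  set t0 : ℝ := -(x 1)/(2 * x 2) with ht0
  have key : ∀ d : ℝ, shiftX x d ∈ Pt4 := by
    intro d
    refine ⟨?_, ?_, ?_, ?_⟩
    · rw [fPoly_shift, gPoly_shift, hPoly_shift]; exact isPolyKnot_shift hk d
    · rw [fPoly_shift, natDegree_shift]; exact d2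
    · rw [gPoly_shift, natDegree_shift]; exact d3
    · rw [hPoly_shift, natDegree_shift]; exact d4
  have hz1 : shiftX x (1 * t0) 1 = 0 := by
    show 2 * x 2 * (1 * t0) + x 1 = 0
    rw [ht0]; field_simp; ring
  have hcont : Continuous (fun s : ℝ => shiftX x (s * t0)) := by
    refine continuous_pi fun i => ?_
    fin_cases i
    · exact (by fun_prop : Continuous fun s : ℝ => x 2*(s*t0)^2 + x 1*(s*t0) + x 0)
    · exact (by fun_prop : Continuous fun s : ℝ => 2*x 2*(s*t0) + x 1)
    · exact (by fun_prop : Continuous fun s : ℝ => x 2)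
    · exact (by fun_prop : Continuous fun s : ℝ => x 6*(s*t0)^3 + x 5*(s*t0)^2 + x 4*(s*t0) + x 3)
    · exact (by fun_prop : Continuous fun s : ℝ => 3*x 6*(s*t0)^2 + 2*x 5*(s*t0) + x 4)
    · exact (by fun_prop : Continuous fun s : ℝ => 3*x 6*(s*t0) + x 5)
    · exact (by fun_prop : Continuous fun s : ℝ => x 6)
    · exact (by fun_prop : Continuous fun s : ℝ =>
        x 11*(s*t0)^4 + x 10*(s*t0)^3 + x 9*(s*t0)^2 + x 8*(s*t0) + x 7)
    · exact (by fun_prop : Continuous fun s : ℝ =>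
        4*x 11*(s*t0)^3 + 3*x 10*(s*t0)^2 + 2*x 9*(s*t0) + x 8)
    · exact (by fun_prop : Continuous fun s : ℝ => 6*x 11*(s*t0)^2 + 3*x 10*(s*t0) + x 9)
    · exact (by fun_prop : Continuous fun s : ℝ => 4*x 11*(s*t0) + x 10)
    · exact (by fun_prop : Continuous fun s : ℝ => x 11)
  have hj : JoinedIn P4 (shiftX x ((0:ℝ) * t0)) (shiftX x ((1:ℝ) * t0)) :=
    joinedIn_of_path_s11 hcont (fun t _ => Pt4_sub_P4 (key _))
  have hx0 : shiftX x ((0:ℝ) * t0) = x := by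
    funext i; fin_cases i
    · exact (by ring : x 2*((0:ℝ)*t0)^2 + x 1*((0:ℝ)*t0) + x 0 = x 0)
    · exact (by ring : 2*x 2*((0:ℝ)*t0) + x 1 = x 1)
    · rfl
    · exact (by ring : x 6*((0:ℝ)*t0)^3 + x 5*((0:ℝ)*t0)^2 + x 4*((0:ℝ)*t0) + x 3 = x 3)
    · exact (by ring : 3*x 6*((0:ℝ)*t0)^2 + 2*x 5*((0:ℝ)*t0) + x 4 = x 4)
    · exact (by ring : 3*x 6*((0:ℝ)*t0) + x 5 = x 5)
    · rfl
    · exact (by ring :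
        x 11*((0:ℝ)*t0)^4 + x 10*((0:ℝ)*t0)^3 + x 9*((0:ℝ)*t0)^2 + x 8*((0:ℝ)*t0) + x 7 = x 7)
    · exact (by ring : 4*x 11*((0:ℝ)*t0)^3 + 3*x 10*((0:ℝ)*t0)^2 + 2*x 9*((0:ℝ)*t0) + x 8 = x 8)
    · exact (by ring : 6*x 11*((0:ℝ)*t0)^2 + 3*x 10*((0:ℝ)*t0) + x 9 = x 9)
    · exact (by ring : 4*x 11*((0:ℝ)*t0) + x 10 = x 10)
    · rfl
  rw [hx0] at hj
  exact ⟨shiftX x ((1:ℝ) * t0), key _, hz1, hj⟩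

/-! ### Piece B: making the linear coefficient of `g` nonzero -/

noncomputable def pB (z : Fin 12 → ℝ) (e s : ℝ) : Fin 12 → ℝ :=
![z 0, z 1, z 2, z 3, z 4 + s * e, z 5, z 6, z 7, z 8, z 9, z 10, z 11]

lemma pieceB (z : Fin 12 → ℝ) (h1 : z 1 = 0) (h2 : z 2 ≠ 0) (h6 : z 6 ≠ 0) (h11 : z 11 ≠ 0)
    (hC : Cond z) :
    ∃ w, (w 1 = 0 ∧ w 2 ≠ 0 ∧ w 4 ≠ 0 ∧ w 6 ≠ 0 ∧ w 11 ≠ 0 ∧ Cond w) ∧ JoinedIn P4 z w := by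
  classical
  set e : ℝ := if z 4 = 0 then z 6 else 0 with he
  have hcond : ∀ s : ℝ, 0 ≤ s → Cond (pB z e s) := by
    intro s hs r hr
    show z 4 + s * e + z 6 * r ≠ 0 ∨ z 8 + z 10 * r ≠ 0
    by_cases h4 : z 4 = 0
    · rcases eq_or_lt_of_le (add_nonneg hs hr) with h0 | h0
      · right
        have hr0 : r = 0 := by linarith
        rcases hC 0 le_rfl with h | h
        · exact absurd (by rw [h4]; ring) h
        · intro h0'; apply h; rw [hr0] at h0'; linear_combination h0'
      · left
        rw [h4, he, if_pos h4]
        intro hcontra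
        have hz : z 6 * (s + r) = 0 := by linear_combination hcontra
        rcases mul_eq_zero.1 hz with h | h
        · exact h6 h
        · linarith
    · rw [he, if_neg h4]
      rcases hC r hr with h | h
      · left; intro h0'; apply h; linear_combination h0'
      · right; exact h
  have hw4 : pB z e 1 4 ≠ 0 := by
    show z 4 + 1 * e ≠ 0
    by_cases h4 : z 4 = 0
    · rw [h4, he, if_pos h4]; simpa using h6
    · rw [he, if_neg h4]; simpa using h4
  have hcont : Continuous (fun s : ℝ => pB z e s) := by
    refine continuous_pi fun i => ?_
    fin_cases i
    · exact (by fun_prop : Continuous fun s : ℝ => z 0)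
    · exact (by fun_prop : Continuous fun s : ℝ => z 1)
    · exact (by fun_prop : Continuous fun s : ℝ => z 2)
    · exact (by fun_prop : Continuous fun s : ℝ => z 3)
    · exact (by fun_prop : Continuous fun s : ℝ => z 4 + s * e)
    · exact (by fun_prop : Continuous fun s : ℝ => z 5)
    · exact (by fun_prop : Continuous fun s : ℝ => z 6)
    · exact (by fun_prop : Continuous fun s : ℝ => z 7)
    · exact (by fun_prop : Continuous fun s : ℝ => z 8)
    · exact (by fun_prop : Continuous fun s : ℝ => z 9)
    · exact (by fun_prop : Continuous fun s : ℝ => z 10)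
    · exact (by fun_prop : Continuous fun s : ℝ => z 11)
  have hmem : ∀ s ∈ Set.Icc (0:ℝ) 1, pB z e s ∈ P4 := by
    intro s hs
    exact mem_P4_1 _ h1 h2 h6 h11 (hcond s hs.1)
  have hj := joinedIn_of_path_s11 hcont hmem
  have h0 : pB z e 0 = z := by
    funext i; fin_cases i
    · rfl
    · rfl
    · rfl
    · rfl
    · exact (by ring : z 4 + (0:ℝ)*e = z 4)
    · rfl
    · rfl
    · rfl
    · rfl
    · rfl
    · rfl
    · rfl
  rw [h0] at hj
  exact ⟨pB z e 1, ⟨h1, h2, hw4, h6, h11, hcond 1 zero_le_one⟩, hj⟩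

/-! ### Piece C: collapsing to a knot with degrees (0, 1, 2) -/

noncomputable def pC (w : Fin 12 → ℝ) (s : ℝ) : Fin 12 → ℝ :=
![w 0, (1-s)*w 1, (1-s)*w 2, w 3, w 4, (1-s)*w 5, (1-s)*w 6, w 7, w 8, (1-s)*w 9 + s,
  (1-s)*w 10, (1-s)*w 11]

lemma pieceC (w : Fin 12 → ℝ) (h1 : w 1 = 0) (h2 : w 2 ≠ 0) (h4 : w 4 ≠ 0) (h6 : w 6 ≠ 0)
    (h11 : w 11 ≠ 0) (hC : Cond w) :
    ∃ y ∈ P4, (fPoly y).natDegree = 0 ∧ (gPoly y).natDegree = 1 ∧ (hPoly y).natDegree = 2 ∧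
      JoinedIn P4 w y := by
  have hmem : ∀ s ∈ Set.Icc (0:ℝ) 1, pC w s ∈ P4 := by
    rintro s ⟨hs0, hs1⟩
    by_cases hs : s = 1
    · subst hs
      refine mem_P4_2 (pC w 1) ?_ ?_ ?_ ?_ ?_ ?_ ?_ ?_
      · exact (by rw [h1]; ring : (1-(1:ℝ))*w 1 = 0)
      · exact (by ring : (1-(1:ℝ))*w 2 = 0)
      · exact (by ring : (1-(1:ℝ))*w 5 = 0)
      · exact (by ring : (1-(1:ℝ))*w 6 = 0)
      · exact h4
      · exact (by norm_num : (1-(1:ℝ))*w 9 + 1 ≠ 0)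
      · exact (by ring : (1-(1:ℝ))*w 10 = 0)
      · exact (by ring : (1-(1:ℝ))*w 11 = 0)
    · have hs1' : (1:ℝ) - s ≠ 0 := sub_ne_zero.2 (Ne.symm hs)
      refine mem_P4_1 (pC w s) ?_ ?_ ?_ ?_ ?_
      · exact (by rw [h1]; ring : (1-s)*w 1 = 0)
      · exact mul_ne_zero hs1' h2
      · exact mul_ne_zero hs1' h6
      · exact mul_ne_zero hs1' h11
      · intro r hr
        show w 4 + (1-s)*w 6 * r ≠ 0 ∨ w 8 + (1-s)*w 10 * r ≠ 0
        have hnn : 0 ≤ (1-s)*r := mul_nonneg (by linarith) hr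
        rcases hC ((1-s)*r) hnn with h | h
        · left; intro h0'; apply h; linear_combination h0'
        · right; intro h0'; apply h; linear_combination h0'
  have hcont : Continuous (fun s : ℝ => pC w s) := by
    refine continuous_pi fun i => ?_
    fin_cases i
    · exact (by fun_prop : Continuous fun s : ℝ => w 0)
    · exact (by fun_prop : Continuous fun s : ℝ => (1-s)*w 1)
    · exact (by fun_prop : Continuous fun s : ℝ => (1-s)*w 2)
    · exact (by fun_prop : Continuous fun s : ℝ => w 3)
    · exact (by fun_prop : Continuous fun s : ℝ => w 4)
    · exact (by fun_prop : Continuous fun s : ℝ => (1-s)*w 5)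
    · exact (by fun_prop : Continuous fun s : ℝ => (1-s)*w 6)
    · exact (by fun_prop : Continuous fun s : ℝ => w 7)
    · exact (by fun_prop : Continuous fun s : ℝ => w 8)
    · exact (by fun_prop : Continuous fun s : ℝ => (1-s)*w 9 + s)
    · exact (by fun_prop : Continuous fun s : ℝ => (1-s)*w 10)
    · exact (by fun_prop : Continuous fun s : ℝ => (1-s)*w 11)
  have hj := joinedIn_of_path_s11 hcont hmem
  have h0 : pC w 0 = w := by
    funext i; fin_cases i
    · rfl
    · exact (by ring : (1-(0:ℝ))*w 1 = w 1)
    · exact (by ring : (1-(0:ℝ))*w 2 = w 2)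
    · rfl
    · rfl
    · exact (by ring : (1-(0:ℝ))*w 5 = w 5)
    · exact (by ring : (1-(0:ℝ))*w 6 = w 6)
    · rfl
    · rfl
    · exact (by ring : (1-(0:ℝ))*w 9 + 0 = w 9)
    · exact (by ring : (1-(0:ℝ))*w 10 = w 10)
    · exact (by ring : (1-(0:ℝ))*w 11 = w 11)
  rw [h0] at hj
  refine ⟨pC w 1, hmem 1 (by norm_num), ?_, ?_, ?_, hj⟩
  · exact ndF0 _ (by rw [h1]; ring : (1-(1:ℝ))*w 1 = 0) (by ring : (1-(1:ℝ))*w 2 = 0)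
  · exact ndG1 _ (by ring : (1-(1:ℝ))*w 6 = 0) (by ring : (1-(1:ℝ))*w 5 = 0) h4
  · exact ndH2 _ (by ring : (1-(1:ℝ))*w 11 = 0) (by ring : (1-(1:ℝ))*w 10 = 0)
      (by norm_num : (1-(1:ℝ))*w 9 + 1 ≠ 0)

/-- Every polynomial knot `φ ∈ P̃₄` is joined by a path inside `P₄` to a
polynomial knot `ψ ∈ P₄` whose first component is constant, whose second component has
degree `1`, and whose third component has degree `2`. -/
theorem stmt_11 (x : Fin 12 → ℝ) (hx : x ∈ Pt4) :
    ∃ y ∈ P4, (fPoly y).natDegree = 0 ∧ (gPoly y).natDegree = 1 ∧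
      (hPoly y).natDegree = 2 ∧ JoinedIn P4 x y := by
  obtain ⟨z, hzPt, hz1, hj1⟩ := pieceA x hx
  obtain ⟨hkz, dz2, dz3, dz4⟩ := hzPt
  have hz2 := a2_ne z dz2
  have hz6 := b3_ne z dz3
  have hz11 := c4_ne z dz4
  have hCz := cond_of_knot z hz1 hkz
  obtain ⟨w, ⟨hw1, hw2, hw4, hw6, hw11, hCw⟩, hj2⟩ := pieceB z hz1 hz2 hz6 hz11 hCz
  obtain ⟨y, hy, d0, d1, d2', hj3⟩ := pieceC w hw1 hw2 hw4 hw6 hw11 hCw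
  exact ⟨y, hy, d0, d1, d2', (hj1.trans hj2).trans hj3⟩
end

section
/- The space P₄ is path connected. -/
open Polynomial

-- ===== infrastructure =====
section Infra
variable {x : Fin 12 → ℝ} {t u : ℝ}

lemma feval : (fPoly x).eval t = x 2 * t^2 + x 1 * t + x 0 := by simp [fPoly]
lemma geval : (gPoly x).eval t = x 6 * t^3 + x 5 * t^2 + x 4 * t + x 3 := by simp [gPoly]
lemma heval : (hPoly x).eval t = x 11 * t^4 + x 10 * t^3 + x 9 * t^2 + x 8 * t + x 7 := by
  simp [hPoly]
lemma fdeval : (derivative (fPoly x)).eval t = 2 * x 2 * t + x 1 := by simp [fPoly]; ring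
lemma gdeval : (derivative (gPoly x)).eval t = 3 * x 6 * t^2 + 2 * x 5 * t + x 4 := by
  simp [gPoly]; ring
lemma hdeval : (derivative (hPoly x)).eval t
    = 4 * x 11 * t^3 + 3 * x 10 * t^2 + 2 * x 9 * t + x 8 := by simp [hPoly]; ring

lemma gcoeff1 : (gPoly x).coeff 1 = x 4 := by simp [gPoly, coeff_one]
lemma gcoeff2 : (gPoly x).coeff 2 = x 5 := by simp [gPoly]
lemma gcoeff3 : (gPoly x).coeff 3 = x 6 := by simp [gPoly]
lemma hcoeff2 : (hPoly x).coeff 2 = x 9 := by simp [hPoly]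
lemma hcoeff3 : (hPoly x).coeff 3 = x 10 := by simp [hPoly]
lemma hcoeff4 : (hPoly x).coeff 4 = x 11 := by simp [hPoly]

lemma f_le : (fPoly x).natDegree ≤ 2 := natDegree_quadratic_le
lemma g_le : (gPoly x).natDegree ≤ 3 := natDegree_cubic_le
lemma h_le : (hPoly x).natDegree ≤ 4 := by unfold hPoly; compute_degree
lemma f_le1 (h : x 2 = 0) : (fPoly x).natDegree ≤ 1 := by
  unfold fPoly; rw [h, map_zero, zero_mul, zero_add]; exact natDegree_linear_le
lemma f_eq0 (h2 : x 2 = 0) (h1 : x 1 = 0) : (fPoly x).natDegree = 0 := by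
  unfold fPoly; rw [h2, h1]; simp
lemma g_le2 (h : x 6 = 0) : (gPoly x).natDegree ≤ 2 := by
  unfold gPoly; rw [h, map_zero, zero_mul, zero_add]; exact natDegree_quadratic_le
lemma g_le1 (h6 : x 6 = 0) (h5 : x 5 = 0) : (gPoly x).natDegree ≤ 1 := by
  unfold gPoly; rw [h6, h5]; simp only [map_zero, zero_mul, zero_add]
  exact natDegree_linear_le
lemma h_le3 (h : x 11 = 0) : (hPoly x).natDegree ≤ 3 := by
  unfold hPoly; rw [h, map_zero, zero_mul, zero_add]; exact natDegree_cubic_le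
lemma g_ge1 (h : x 4 ≠ 0) : 1 ≤ (gPoly x).natDegree :=
  le_natDegree_of_ne_zero (by rwa [gcoeff1])
lemma g_ge2 (h : x 5 ≠ 0) : 2 ≤ (gPoly x).natDegree :=
  le_natDegree_of_ne_zero (by rwa [gcoeff2])
lemma g_ge3 (h : x 6 ≠ 0) : 3 ≤ (gPoly x).natDegree :=
  le_natDegree_of_ne_zero (by rwa [gcoeff3])
lemma h_ge2 (h : x 9 ≠ 0) : 2 ≤ (hPoly x).natDegree :=
  le_natDegree_of_ne_zero (by rwa [hcoeff2])
lemma h_ge3 (h : x 10 ≠ 0) : 3 ≤ (hPoly x).natDegree :=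
  le_natDegree_of_ne_zero (by rwa [hcoeff3])
lemma h_ge4 (h : x 11 ≠ 0) : 4 ≤ (hPoly x).natDegree :=
  le_natDegree_of_ne_zero (by rwa [hcoeff4])
lemma f_eq2 (h : x 2 ≠ 0) : (fPoly x).natDegree = 2 := natDegree_quadratic h
lemma g_eq3 (h : x 6 ≠ 0) : (gPoly x).natDegree = 3 := natDegree_cubic h
lemma h_eq4 (h : x 11 ≠ 0) : (hPoly x).natDegree = 4 := le_antisymm h_le (h_ge4 h)

lemma fPoly_ext {y : Fin 12 → ℝ} (h0 : y 0 = x 0) (h1 : y 1 = x 1) (h2 : y 2 = x 2) :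
    fPoly y = fPoly x := by unfold fPoly; rw [h0, h1, h2]
lemma gPoly_ext {y : Fin 12 → ℝ} (h3 : y 3 = x 3) (h4 : y 4 = x 4) (h5 : y 5 = x 5)
    (h6 : y 6 = x 6) : gPoly y = gPoly x := by unfold gPoly; rw [h3, h4, h5, h6]
lemma hPoly_ext {y : Fin 12 → ℝ} (h7 : y 7 = x 7) (h8 : y 8 = x 8) (h9 : y 9 = x 9)
    (h10 : y 10 = x 10) (h11 : y 11 = x 11) : hPoly y = hPoly x := by
  unfold hPoly; rw [h7, h8, h9, h10, h11]

lemma cube_inj (h : t^3 = u^3) : t = u :=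
  ((Odd.strictMono_pow (R := ℝ) (by decide)).injective h)

end Infra

-- ===== membership lemmas =====
section Mem
variable {x : Fin 12 → ℝ}

/-- prod triple ≠ 0 helper -/
lemma triple_ne {a b c : ℝ} (h : ¬(a = 0 ∧ b = 0 ∧ c = 0)) :
    ((a, b, c) : ℝ × ℝ × ℝ) ≠ (0, 0, 0) := by
  simpa [Prod.ext_iff] using h

lemma Klin (h2 : x 2 = 0) (h1 : x 1 ≠ 0) (hg : 2 ≤ (gPoly x).natDegree)
    (hgh : (gPoly x).natDegree < (hPoly x).natDegree) (hh : (hPoly x).natDegree ≤ 4) :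
    x ∈ P4 := by
  refine ⟨⟨?_, ?_⟩, ?_, hgh, hh⟩
  · intro t u h
    simp only [Prod.ext_iff, feval] at h
    obtain ⟨h', -, -⟩ := h
    rw [h2] at h'
    have : x 1 * t = x 1 * u := by nlinarith [h']
    exact mul_left_cancel₀ h1 this
  · intro t
    apply triple_ne
    rintro ⟨hf, -, -⟩
    rw [fdeval, h2] at hf
    apply h1; linarith
  · exact lt_of_le_of_lt (f_le1 h2) (lt_of_lt_of_le one_lt_two hg)

lemma Kconst (h2 : x 2 = 0) (h1 : x 1 = 0) (hb3 : x 6 = 0) (hb2 : x 5 = 0) (hb1 : x 4 ≠ 0)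
    (hh2 : 2 ≤ (hPoly x).natDegree) (hh : (hPoly x).natDegree ≤ 4) : x ∈ P4 := by
  have hg1 : (gPoly x).natDegree ≤ 1 := g_le1 hb3 hb2
  refine ⟨⟨?_, ?_⟩, ?_, ?_, hh⟩
  · intro t u h
    simp only [Prod.ext_iff, geval] at h
    obtain ⟨-, h', -⟩ := h
    rw [hb3, hb2] at h'
    have : x 4 * t = x 4 * u := by nlinarith [h']
    exact mul_left_cancel₀ hb1 this
  · intro t
    apply triple_ne
    rintro ⟨-, hg, -⟩
    rw [gdeval, hb3, hb2] at hg
    apply hb1; linarith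
  · rw [f_eq0 h2 h1]
    exact lt_of_lt_of_le one_pos (g_ge1 hb1)
  · exact lt_of_le_of_lt hg1 (lt_of_lt_of_le one_lt_two hh2)

lemma Kcube (hb2 : x 5 = 0) (hb1 : x 4 = 0) (hb3 : x 6 ≠ 0) (hc4 : x 11 ≠ 0)
    (hc1 : x 8 ≠ 0) : x ∈ P4 := by
  refine ⟨⟨?_, ?_⟩, ?_, ?_, h_le⟩
  · intro t u h
    simp only [Prod.ext_iff, geval] at h
    obtain ⟨-, h', -⟩ := h
    rw [hb2, hb1] at h'
    have : t^3 = u^3 := mul_left_cancel₀ hb3 (by linarith)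
    exact cube_inj this
  · intro t
    apply triple_ne
    rintro ⟨-, hg, hh'⟩
    rw [gdeval, hb2, hb1] at hg
    rw [hdeval] at hh'
    rcases eq_or_ne t 0 with rfl | ht
    · apply hc1; nlinarith [hh']
    · exact hb3 (by nlinarith [hg, sq_nonneg t, pow_two_pos_of_ne_zero ht])
  · exact lt_of_le_of_lt f_le (lt_of_lt_of_le (by norm_num) (g_ge3 hb3))
  · rw [g_eq3 hb3, h_eq4 hc4]; norm_num

lemma Khcube (h2 : x 2 = 0) (hb3 : x 6 = 0) (hc4 : x 11 = 0) (hc3 : x 10 ≠ 0)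
    (hc2 : x 9 = 0) (hc1 : x 8 = 0) (hb1 : x 4 ≠ 0)
    (hfg : (fPoly x).natDegree < (gPoly x).natDegree) : x ∈ P4 := by
  refine ⟨⟨?_, ?_⟩, hfg, ?_, h_le⟩
  · intro t u h
    simp only [Prod.ext_iff, heval] at h
    obtain ⟨-, -, h'⟩ := h
    rw [hc4, hc2, hc1] at h'
    have : t^3 = u^3 := mul_left_cancel₀ hc3 (by linarith)
    exact cube_inj this
  · intro t
    apply triple_ne
    rintro ⟨-, hg, hh'⟩
    rw [hdeval, hc4, hc2, hc1] at hh'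
    rw [gdeval, hb3] at hg
    rcases eq_or_ne t 0 with rfl | ht
    · apply hb1; nlinarith [hg]
    · exact hc3 (by nlinarith [hh', pow_two_pos_of_ne_zero ht])
  · have h3 : (hPoly x).natDegree = 3 := le_antisymm (h_le3 hc4) (h_ge3 hc3)
    rw [h3]
    exact lt_of_le_of_lt (g_le2 hb3) (by norm_num)

lemma Kquad (h1 : x 1 = 0) (h2 : x 2 ≠ 0) (hb3 : x 6 ≠ 0) (hc4 : x 11 ≠ 0)
    (hbc : ¬(x 4 = 0 ∧ x 8 = 0))
    (hP : ∀ r : ℝ, 0 < r → x 6 * r + x 4 = 0 → x 10 * r + x 8 = 0 → False) : x ∈ P4 := by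
  refine ⟨⟨?_, ?_⟩, ?_, ?_, h_le⟩
  · intro t u h
    simp only [Prod.ext_iff, feval, geval, heval] at h
    obtain ⟨hf, hg, hh'⟩ := h
    rw [h1] at hf
    have htu : t^2 = u^2 := mul_left_cancel₀ h2 (by linarith)
    have : (t - u) * (t + u) = 0 := by nlinarith [htu]
    rcases mul_eq_zero.1 this with h' | h'
    · linarith
    · -- u = -t
      have hu : u = -t := by linarith
      subst hu
      by_cases ht : t = 0
      · rw [ht]; norm_num
      exfalso
      have hgo : t * (x 6 * t^2 + x 4) = 0 := by nlinarith [hg]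
      have hho : t * (x 10 * t^2 + x 8) = 0 := by nlinarith [hh']
      have hg0 : x 6 * t^2 + x 4 = 0 := by
        rcases mul_eq_zero.1 hgo with h'' | h''; exact absurd h'' ht; exact h''
      have hh0 : x 10 * t^2 + x 8 = 0 := by
        rcases mul_eq_zero.1 hho with h'' | h''; exact absurd h'' ht; exact h''
      exact hP (t^2) (pow_two_pos_of_ne_zero ht) hg0 hh0
  · intro t
    apply triple_ne
    rintro ⟨hf, hg, hh'⟩
    rw [fdeval, h1] at hf
    rcases eq_or_ne t 0 with rfl | ht
    · rw [gdeval] at hg; rw [hdeval] at hh'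
      exact hbc ⟨by nlinarith [hg], by nlinarith [hh']⟩
    · have : 2 * x 2 * t ≠ 0 := by
        intro h'; rcases mul_eq_zero.1 h' with h'' | h''
        · rcases mul_eq_zero.1 h'' with h3 | h3; norm_num at h3; exact h2 h3
        · exact ht h''
      exact this (by linarith)
  · rw [f_eq2 h2, g_eq3 hb3]; norm_num
  · rw [g_eq3 hb3, h_eq4 hc4]; norm_num

lemma Dquad (hx : x ∈ P4) (h1 : x 1 = 0) (h2 : x 2 ≠ 0) :
    x 6 ≠ 0 ∧ x 11 ≠ 0 ∧ ¬(x 4 = 0 ∧ x 8 = 0) ∧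
      (∀ r : ℝ, 0 < r → x 6 * r + x 4 = 0 → x 10 * r + x 8 = 0 → False) := by
  obtain ⟨⟨hinj, hder⟩, hfg, hgh, hh⟩ := hx
  have hf2 : (fPoly x).natDegree = 2 := f_eq2 h2
  have hg3 : (gPoly x).natDegree = 3 := by
    have h' : 2 < (gPoly x).natDegree := hf2 ▸ hfg
    have := g_le (x := x); omega
  have hh4 : (hPoly x).natDegree = 4 := by
    have h' : 3 < (hPoly x).natDegree := hg3 ▸ hgh
    have := h_le (x := x); omega
  have hgne : gPoly x ≠ 0 := fun h0 => by simp [h0] at hg3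
  have hhne : hPoly x ≠ 0 := fun h0 => by simp [h0] at hh4
  have hb3 : x 6 ≠ 0 := by
    have := mt leadingCoeff_eq_zero.1 hgne
    rwa [leadingCoeff, hg3, gcoeff3] at this
  have hc4 : x 11 ≠ 0 := by
    have := mt leadingCoeff_eq_zero.1 hhne
    rwa [leadingCoeff, hh4, hcoeff4] at this
  refine ⟨hb3, hc4, ?_, ?_⟩
  · rintro ⟨hb1, hc1⟩
    apply hder 0
    have hf' : (derivative (fPoly x)).eval 0 = 0 := by rw [fdeval, h1]; ring
    have hg' : (derivative (gPoly x)).eval 0 = 0 := by rw [gdeval, hb1]; ring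
    have hh' : (derivative (hPoly x)).eval 0 = 0 := by rw [hdeval, hc1]; ring
    rw [hf', hg', hh']
  · intro r hr hgr hhr
    set t := Real.sqrt r with htdef
    have ht : 0 < t := Real.sqrt_pos.2 hr
    have ht2 : t^2 = r := Real.sq_sqrt hr.le
    have : t = -t := by
      have heq : (fun t : ℝ => ((fPoly x).eval t, (gPoly x).eval t, (hPoly x).eval t)) t
          = (fun t : ℝ => ((fPoly x).eval t, (gPoly x).eval t, (hPoly x).eval t)) (-t) := by
        simp only [Prod.ext_iff, feval, geval, heval]
        refine ⟨by rw [h1]; ring, ?_, ?_⟩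
        · have : x 6 * t^2 + x 4 = 0 := by rw [ht2]; exact hgr
          nlinarith [this]
        · have : x 10 * t^2 + x 8 = 0 := by rw [ht2]; exact hhr
          nlinarith [this]
      exact hinj heq
    linarith

-- ===== points and segments =====
def pt (a0 a1 a2 b0 b1 b2 b3 c0 c1 c2 c3 c4 : ℝ) : Fin 12 → ℝ :=
  ![a0, a1, a2, b0, b1, b2, b3, c0, c1, c2, c3, c4]

section ptlemmas
variable {a0 a1 a2 b0 b1 b2 b3 c0 c1 c2 c3 c4 : ℝ}
@[simp] lemma pt_0 : pt a0 a1 a2 b0 b1 b2 b3 c0 c1 c2 c3 c4 0 = a0 := rfl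
@[simp] lemma pt_1 : pt a0 a1 a2 b0 b1 b2 b3 c0 c1 c2 c3 c4 1 = a1 := rfl
@[simp] lemma pt_2 : pt a0 a1 a2 b0 b1 b2 b3 c0 c1 c2 c3 c4 2 = a2 := rfl
@[simp] lemma pt_3 : pt a0 a1 a2 b0 b1 b2 b3 c0 c1 c2 c3 c4 3 = b0 := rfl
@[simp] lemma pt_4 : pt a0 a1 a2 b0 b1 b2 b3 c0 c1 c2 c3 c4 4 = b1 := rfl
@[simp] lemma pt_5 : pt a0 a1 a2 b0 b1 b2 b3 c0 c1 c2 c3 c4 5 = b2 := rfl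
@[simp] lemma pt_6 : pt a0 a1 a2 b0 b1 b2 b3 c0 c1 c2 c3 c4 6 = b3 := rfl
@[simp] lemma pt_7 : pt a0 a1 a2 b0 b1 b2 b3 c0 c1 c2 c3 c4 7 = c0 := rfl
@[simp] lemma pt_8 : pt a0 a1 a2 b0 b1 b2 b3 c0 c1 c2 c3 c4 8 = c1 := rfl
@[simp] lemma pt_9 : pt a0 a1 a2 b0 b1 b2 b3 c0 c1 c2 c3 c4 9 = c2 := rfl
@[simp] lemma pt_10 : pt a0 a1 a2 b0 b1 b2 b3 c0 c1 c2 c3 c4 10 = c3 := rfl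
@[simp] lemma pt_11 : pt a0 a1 a2 b0 b1 b2 b3 c0 c1 c2 c3 c4 11 = c4 := rfl
end ptlemmas

def segFn (p q : Fin 12 → ℝ) (s : ℝ) : Fin 12 → ℝ := fun i => (1 - s) * p i + s * q i

@[simp] lemma segFn_apply {p q : Fin 12 → ℝ} {s : ℝ} {i : Fin 12} :
    segFn p q s i = (1 - s) * p i + s * q i := rfl

@[simp] lemma comb_self {s c : ℝ} : (1 - s) * c + s * c = c := by ring

lemma segJoined (p q : Fin 12 → ℝ)
    (hm : ∀ s : ℝ, s ∈ Set.Icc (0:ℝ) 1 → segFn p q s ∈ P4) :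
    JoinedIn P4 p q := by
  have h0 : segFn p q 0 = p := by funext i; simp [segFn]
  have h1 : segFn p q 1 = q := by funext i; simp [segFn]
  refine ⟨⟨⟨fun s => segFn p q (s : ℝ), ?_⟩, ?_, ?_⟩, ?_⟩
  · have : Continuous fun s : ℝ => segFn p q s :=
      continuous_pi fun i => by simp only [segFn]; fun_prop
    exact this.comp continuous_subtype_val
  · simpa using h0
  · simpa using h1
  · intro s; exact hm s s.2

lemma joinedOfPath (γ : ℝ → Fin 12 → ℝ) (hc : Continuous γ)
    (hm : ∀ s : ℝ, s ∈ Set.Icc (0:ℝ) 1 → γ s ∈ P4) : JoinedIn P4 (γ 0) (γ 1) := by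
  refine ⟨⟨⟨fun s => γ s, by fun_prop⟩, by simp, by simp⟩, fun s => hm s s.2⟩

/-- the hub: (t, t², t³) -/
noncomputable def H4 : Fin 12 → ℝ := pt 0 1 0 0 0 1 0 0 0 0 1 0

lemma dg_lt_dh4 {x : Fin 12 → ℝ} (h : x 11 ≠ 0) :
    (gPoly x).natDegree < (hPoly x).natDegree :=
  lt_of_le_of_lt g_le (lt_of_lt_of_le (by norm_num) (h_ge4 h))

lemma dg_lt_dh3 {x : Fin 12 → ℝ} (h10 : x 10 ≠ 0) (h6 : x 6 = 0) :
    (gPoly x).natDegree < (hPoly x).natDegree :=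
  lt_of_le_of_lt (g_le2 h6) (lt_of_lt_of_le (by norm_num) (h_ge3 h10))

lemma FWcore (a1 b0 b1 b2 b3 c0 c1 c2 c3 c4 : ℝ) (ha1 : a1 ≠ 0) (hc4 : c4 ≠ 0)
    (hgd : 2 ≤ (gPoly (pt 0 a1 0 b0 b1 b2 b3 c0 c1 c2 c3 c4)).natDegree) :
    JoinedIn P4 (pt 0 a1 0 b0 b1 b2 b3 c0 c1 c2 c3 c4) H4 := by
  -- step 1: normalize g to t³
  have step1 : JoinedIn P4 (pt 0 a1 0 b0 b1 b2 b3 c0 c1 c2 c3 c4)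
      (pt 0 a1 0 0 0 0 1 c0 c1 c2 c3 c4) := by
    by_cases hb3 : b3 = 0
    · -- b3 = 0 hence b2 ≠ 0 : raise b3 to 1, then clear lower coeffs
      have hb2 : b2 ≠ 0 := by
        intro hb2'
        have := g_le1 (x := pt 0 a1 0 b0 b1 b2 b3 c0 c1 c2 c3 c4)
          (by simpa using hb3) (by simpa using hb2')
        omega
      refine (segJoined _ (pt 0 a1 0 b0 b1 b2 1 c0 c1 c2 c3 c4) ?_).trans
        (segJoined _ (pt 0 a1 0 0 0 0 1 c0 c1 c2 c3 c4) ?_)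
      · intro s hs
        refine Klin (by simp) (by simpa using ha1)
          (g_ge2 (by simpa using hb2)) (dg_lt_dh4 (by simpa using hc4)) h_le
      · intro s hs
        refine Klin (by simp) (by simpa using ha1)
          (le_trans (by norm_num) (g_ge3 (by simp))) (dg_lt_dh4 (by simpa using hc4)) h_le
    · -- b3 ≠ 0 : clear b0 b1, set b2 := 1; slide b3 to 1; clear b2
      refine (segJoined _ (pt 0 a1 0 0 0 1 b3 c0 c1 c2 c3 c4) ?_).trans
        ((segJoined _ (pt 0 a1 0 0 0 1 1 c0 c1 c2 c3 c4) ?_).trans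
          (segJoined _ (pt 0 a1 0 0 0 0 1 c0 c1 c2 c3 c4) ?_))
      · intro s hs
        refine Klin (by simp) (by simpa using ha1)
          (le_trans (by norm_num) (g_ge3 (by simpa using hb3)))
          (dg_lt_dh4 (by simpa using hc4)) h_le
      · intro s hs
        refine Klin (by simp) (by simpa using ha1)
          (g_ge2 (by simp)) (dg_lt_dh4 (by simpa using hc4)) h_le
      · intro s hs
        refine Klin (by simp) (by simpa using ha1)
          (le_trans (by norm_num) (g_ge3 (by simp))) (dg_lt_dh4 (by simpa using hc4)) h_le
  -- step 2: lower g to t², with h still of degree 4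
  have step2 : JoinedIn P4 (pt 0 a1 0 0 0 0 1 c0 c1 c2 c3 c4)
      (pt 0 a1 0 0 0 1 0 c0 c1 c2 c3 c4) := by
    refine segJoined _ _ ?_
    intro s hs
    refine Klin (by simp) (by simpa using ha1) ?_ (dg_lt_dh4 (by simpa using hc4)) h_le
    rcases eq_or_ne s 1 with rfl | hs1
    · exact g_ge2 (by norm_num)
    · refine le_trans (by norm_num) (g_ge3 ?_)
      simp only [segFn_apply, pt_6, mul_zero, add_zero, mul_one]
      intro h; apply hs1; linarith
  -- step 3: move h to t³
  have step3 : JoinedIn P4 (pt 0 a1 0 0 0 1 0 c0 c1 c2 c3 c4)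
      (pt 0 a1 0 0 0 1 0 0 0 0 1 0) := by
    refine segJoined _ _ ?_
    intro s hs
    refine Klin (by simp) (by simpa using ha1) (g_ge2 (by simp)) ?_ h_le
    rcases eq_or_ne s 1 with rfl | hs1
    · refine dg_lt_dh3 (by norm_num) (by simp)
    · refine lt_of_le_of_lt (g_le2 (by simp)) (lt_of_lt_of_le (by norm_num) (h_ge4 ?_))
      simp only [segFn_apply, pt_11, mul_zero, add_zero, mul_one]
      intro h
      rcases mul_eq_zero.1 h with h' | h'
      · apply hs1; linarith
      · exact hc4 h'
  refine step1.trans (step2.trans (step3.trans ?_))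
  -- step 4: fix the sign of a1
  rcases lt_or_gt_of_ne ha1 with hneg | hpos
  · -- a1 < 0 : detour through (a1 t, t³, t⁴ + t)
    refine (segJoined _ (pt 0 a1 0 0 0 1 0 0 0 0 1 1) ?_).trans
      ((segJoined _ (pt 0 a1 0 0 0 0 1 0 0 0 1 1) ?_).trans
        ((segJoined _ (pt 0 a1 0 0 0 0 1 0 1 0 0 1) ?_).trans
          ((segJoined _ (pt 0 1 0 0 0 0 1 0 1 0 0 1) ?_).trans
            ((segJoined _ (pt 0 1 0 0 0 1 0 0 1 0 0 1) ?_).trans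
              (segJoined _ H4 ?_)))))
    · intro s hs
      refine Klin (by simp) (by simpa using ha1) (g_ge2 (by simp))
        (lt_of_le_of_lt (g_le2 (by simp)) (lt_of_lt_of_le (by norm_num) (h_ge3 (by simp)))) h_le
    · intro s hs
      refine Klin (by simp) (by simpa using ha1) ?_ (dg_lt_dh4 (by simp)) h_le
      rcases eq_or_ne s 0 with rfl | hs0
      · exact g_ge2 (by norm_num)
      · exact le_trans (by norm_num) (g_ge3 (by simpa using hs0))
    · intro s hs
      exact Klin (by simp) (by simpa using ha1)
        (le_trans (by norm_num) (g_ge3 (by simp))) (dg_lt_dh4 (by simp)) h_le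
    · intro s hs
      exact Kcube (by simp) (by simp) (by simp) (by simp) (by simp)
    · intro s hs
      refine Klin (by simp) (by simp) ?_ (dg_lt_dh4 (by simp)) h_le
      rcases eq_or_ne s 1 with rfl | hs1
      · exact g_ge2 (by norm_num)
      · refine le_trans (by norm_num) (g_ge3 ?_)
        simp only [segFn_apply, pt_6, mul_zero, add_zero, mul_one]
        intro h; apply hs1; linarith
    · intro s hs
      show segFn _ (pt 0 1 0 0 0 1 0 0 0 0 1 0) s ∈ P4
      refine Klin (by simp) (by simp) (g_ge2 (by simp)) ?_ h_le
      rcases eq_or_ne s 1 with rfl | hs1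
      · exact dg_lt_dh3 (by norm_num) (by simp)
      · refine lt_of_le_of_lt (g_le2 (by simp)) (lt_of_lt_of_le (by norm_num) (h_ge4 ?_))
        simp only [segFn_apply, pt_11, mul_zero, add_zero, mul_one, mul_zero]
        intro h; apply hs1; linarith
  · -- a1 > 0 : straight to the hub
    refine segJoined _ H4 ?_
    intro s hs
    show segFn _ (pt 0 1 0 0 0 1 0 0 0 0 1 0) s ∈ P4
    refine Klin (by simp) ?_ (g_ge2 (by simp)) (dg_lt_dh3 (by simp) (by simp)) h_le
    simp only [segFn_apply, pt_1, mul_one]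
    have h1 : 0 ≤ 1 - s := by linarith [hs.2]
    have h2 : 0 ≤ s := hs.1
    intro h
    rcases lt_or_eq_of_le hs.2 with hlt | heq
    · nlinarith [mul_pos hpos (by linarith : (0:ℝ) < 1 - s)]
    · subst heq; norm_num at h

-- ===== FW : from any linear-f point to the hub =====
lemma FW {x : Fin 12 → ℝ} (h2 : x 2 = 0) (h1 : x 1 ≠ 0) (hg : 2 ≤ (gPoly x).natDegree)
    (hgh : (gPoly x).natDegree < (hPoly x).natDegree) (hh : (hPoly x).natDegree ≤ 4) :
    JoinedIn P4 x H4 := by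
  set p1 : Fin 12 → ℝ :=
    pt 0 (x 1) 0 (x 3) (x 4) (x 5) (x 6) (x 7) (x 8) (x 9) (x 10) (x 11) with hp1def
  have hseg0 : JoinedIn P4 x p1 := by
    refine segJoined _ _ ?_
    intro s hs
    have eg : gPoly (segFn x p1 s) = gPoly x :=
      gPoly_ext (by simp [hp1def]) (by simp [hp1def]) (by simp [hp1def]) (by simp [hp1def])
    have eh : hPoly (segFn x p1 s) = hPoly x :=
      hPoly_ext (by simp [hp1def]) (by simp [hp1def]) (by simp [hp1def]) (by simp [hp1def])
        (by simp [hp1def])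
    refine Klin (by simp [hp1def, h2]) (by simp [hp1def]; simpa using h1) ?_ ?_ ?_
    · rw [eg]; exact hg
    · rw [eg, eh]; exact hgh
    · rw [eh]; exact hh
  refine hseg0.trans ?_
  by_cases hc4 : x 11 = 0
  · -- raise c4 to 1 first
    set p2 : Fin 12 → ℝ :=
      pt 0 (x 1) 0 (x 3) (x 4) (x 5) (x 6) (x 7) (x 8) (x 9) (x 10) 1 with hp2def
    have hgp1 : gPoly p1 = gPoly x := gPoly_ext rfl rfl rfl rfl
    have hhp1 : hPoly p1 = hPoly x := hPoly_ext rfl rfl rfl rfl rfl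
    have hp1mem : p1 ∈ P4 := by
      refine Klin rfl h1 ?_ ?_ ?_
      · rw [hgp1]; exact hg
      · rw [hgp1, hhp1]; exact hgh
      · rw [hhp1]; exact hh
    have hseg1 : JoinedIn P4 p1 p2 := by
      refine segJoined _ _ ?_
      intro s hs
      rcases eq_or_ne s 0 with rfl | hs0
      · have : segFn p1 p2 0 = p1 := by funext i; simp [segFn]
        rw [this]; exact hp1mem
      · have eg : gPoly (segFn p1 p2 s) = gPoly x := by
          refine gPoly_ext ?_ ?_ ?_ ?_ <;> simp [hp1def, hp2def]
        refine Klin (by simp [hp1def, hp2def]) (by simp [hp1def, hp2def]; simpa using h1)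
          ?_ ?_ h_le
        · rw [eg]; exact hg
        · refine dg_lt_dh4 ?_
          show (1 - s) * p1 11 + s * p2 11 ≠ 0
          simp [hp1def, hp2def, hc4]; exact hs0
    refine hseg1.trans ?_
    have := FWcore (x 1) (x 3) (x 4) (x 5) (x 6) (x 7) (x 8) (x 9) (x 10) 1 h1 one_ne_zero ?_
    · exact this
    · have eg : gPoly (pt 0 (x 1) 0 (x 3) (x 4) (x 5) (x 6) (x 7) (x 8) (x 9) (x 10) 1)
          = gPoly x := gPoly_ext rfl rfl rfl rfl
      rw [eg]; exact hg
  · have := FWcore (x 1) (x 3) (x 4) (x 5) (x 6) (x 7) (x 8) (x 9) (x 10) (x 11) h1 hc4 ?_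
    · exact this
    · have eg : gPoly (pt 0 (x 1) 0 (x 3) (x 4) (x 5) (x 6) (x 7) (x 8) (x 9) (x 10) (x 11))
          = gPoly x := gPoly_ext rfl rfl rfl rfl
      rw [eg]; exact hg

-- ===== the case deg f = 0, deg g ≥ 2 =====
lemma NonConstSmall {x : Fin 12 → ℝ} (hx : x ∈ P4) (h2 : x 2 = 0) (h1 : x 1 = 0)
    (hg : 2 ≤ (gPoly x).natDegree) : JoinedIn P4 x H4 := by
  obtain ⟨-, -, hgh, hh⟩ := id hx
  set p1 : Fin 12 → ℝ :=
    pt (x 0) 1 0 (x 3) (x 4) (x 5) (x 6) (x 7) (x 8) (x 9) (x 10) (x 11) with hp1def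
  have hseg : JoinedIn P4 x p1 := by
    refine segJoined _ _ ?_
    intro s hs
    rcases eq_or_ne s 0 with rfl | hs0
    · have : segFn x p1 0 = x := by funext i; simp [segFn]
      rw [this]; exact hx
    · have eg : gPoly (segFn x p1 s) = gPoly x := by
        refine gPoly_ext ?_ ?_ ?_ ?_ <;> simp [hp1def]
      have eh : hPoly (segFn x p1 s) = hPoly x := by
        refine hPoly_ext ?_ ?_ ?_ ?_ ?_ <;> simp [hp1def]
      refine Klin (by simp [hp1def, h2]) ?_ ?_ ?_ ?_
      · show (1 - s) * x 1 + s * p1 1 ≠ 0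
        simp [hp1def, h1]; exact hs0
      · rw [eg]; exact hg
      · rw [eg, eh]; exact hgh
      · rw [eh]; exact hh
  refine hseg.trans ?_
  have eg : gPoly p1 = gPoly x := gPoly_ext rfl rfl rfl rfl
  have eh : hPoly p1 = hPoly x := hPoly_ext rfl rfl rfl rfl rfl
  refine FW rfl one_ne_zero ?_ ?_ ?_
  · rw [eg]; exact hg
  · rw [eg, eh]; exact hgh
  · rw [eh]; exact hh

lemma h_le1 {x : Fin 12 → ℝ} (h11 : x 11 = 0) (h10 : x 10 = 0) (h9 : x 9 = 0) :
    (hPoly x).natDegree ≤ 1 := by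
  unfold hPoly; rw [h11, h10, h9]
  simp only [map_zero, zero_mul, zero_add]
  exact natDegree_linear_le

lemma f_eq1 {x : Fin 12 → ℝ} (h2 : x 2 = 0) (h1 : x 1 ≠ 0) : (fPoly x).natDegree = 1 := by
  unfold fPoly; rw [h2]
  simp only [map_zero, zero_mul, zero_add]
  exact natDegree_linear h1

-- ===== the case deg f = 0, deg g = 1 =====
lemma constRoute {x : Fin 12 → ℝ} (hx : x ∈ P4) (h2 : x 2 = 0) (h1 : x 1 = 0)
    (hg1 : (gPoly x).natDegree = 1) : JoinedIn P4 x H4 := by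
  obtain ⟨-, -, hgh, hh⟩ := id hx
  have hb3 : x 6 = 0 := by
    rw [← gcoeff3 (x := x)]; exact coeff_eq_zero_of_natDegree_lt (by omega)
  have hb2 : x 5 = 0 := by
    rw [← gcoeff2 (x := x)]; exact coeff_eq_zero_of_natDegree_lt (by omega)
  have hgne : gPoly x ≠ 0 := fun h0 => by simp [h0] at hg1
  have hb1 : x 4 ≠ 0 := by
    have := mt leadingCoeff_eq_zero.1 hgne
    rwa [leadingCoeff, hg1, gcoeff1] at this
  have hdh2 : 2 ≤ (hPoly x).natDegree := by rw [hg1] at hgh; omega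
  have seg1 : JoinedIn P4 x (pt 0 0 0 (x 3) (x 4) 0 0 (x 7) (x 8) (x 9) (x 10) (x 11)) := by
    refine segJoined _ _ ?_
    intro s hs
    have eh : hPoly (segFn x
        (pt 0 0 0 (x 3) (x 4) 0 0 (x 7) (x 8) (x 9) (x 10) (x 11)) s) = hPoly x := by
      refine hPoly_ext ?_ ?_ ?_ ?_ ?_ <;> simp
    refine Kconst (by simp [h2]) (by simp [h1]) (by simp [hb3]) (by simp [hb2])
      (by simpa using hb1) ?_ ?_
    · rw [eh]; exact hdh2
    · rw [eh]; exact hh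
  -- move h to t³
  have seg2 : JoinedIn P4 (pt 0 0 0 (x 3) (x 4) 0 0 (x 7) (x 8) (x 9) (x 10) (x 11))
      (pt 0 0 0 (x 3) (x 4) 0 0 0 0 0 1 0) := by
    by_cases hctop : x 10 = 0 ∧ x 11 = 0
    · have hc9 : x 9 ≠ 0 := by
        intro h9
        have := h_le1 (x := x) hctop.2 hctop.1 h9
        omega
      refine (segJoined _ (pt 0 0 0 (x 3) (x 4) 0 0 0 0 (x 9) 1 0) ?_).trans
        (segJoined _ (pt 0 0 0 (x 3) (x 4) 0 0 0 0 0 1 0) ?_)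
      · intro s hs
        refine Kconst (by simp) (by simp) (by simp) (by simp) (by simpa using hb1)
          (h_ge2 (by simpa using hc9)) h_le
      · intro s hs
        refine Kconst (by simp) (by simp) (by simp) (by simp) (by simpa using hb1)
          (le_trans (by norm_num) (h_ge3 (by simp))) h_le
    · rcases not_and_or.1 hctop with hne | hne <;>
      push_neg at hne
      · refine ((segJoined _ (pt 0 0 0 (x 3) (x 4) 0 0 0 0 1 (x 10) (x 11)) ?_).trans
          ((segJoined _ (pt 0 0 0 (x 3) (x 4) 0 0 0 0 1 0 0) ?_).trans
            ((segJoined _ (pt 0 0 0 (x 3) (x 4) 0 0 0 0 1 1 0) ?_).trans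
              (segJoined _ (pt 0 0 0 (x 3) (x 4) 0 0 0 0 0 1 0) ?_))))
        · intro s hs
          refine Kconst (by simp) (by simp) (by simp) (by simp) (by simpa using hb1)
            (le_trans (by norm_num) (h_ge3 (by simpa using hne))) h_le
        · intro s hs
          refine Kconst (by simp) (by simp) (by simp) (by simp) (by simpa using hb1)
            (h_ge2 (by simp)) h_le
        · intro s hs
          refine Kconst (by simp) (by simp) (by simp) (by simp) (by simpa using hb1)
            (h_ge2 (by simp)) h_le
        · intro s hs
          refine Kconst (by simp) (by simp) (by simp) (by simp) (by simpa using hb1)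
            (le_trans (by norm_num) (h_ge3 (by simp))) h_le
      · refine ((segJoined _ (pt 0 0 0 (x 3) (x 4) 0 0 0 0 1 (x 10) (x 11)) ?_).trans
          ((segJoined _ (pt 0 0 0 (x 3) (x 4) 0 0 0 0 1 0 0) ?_).trans
            ((segJoined _ (pt 0 0 0 (x 3) (x 4) 0 0 0 0 1 1 0) ?_).trans
              (segJoined _ (pt 0 0 0 (x 3) (x 4) 0 0 0 0 0 1 0) ?_))))
        · intro s hs
          refine Kconst (by simp) (by simp) (by simp) (by simp) (by simpa using hb1)
            (le_trans (by norm_num) (h_ge4 (by simpa using hne))) h_le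
        · intro s hs
          refine Kconst (by simp) (by simp) (by simp) (by simp) (by simpa using hb1)
            (h_ge2 (by simp)) h_le
        · intro s hs
          refine Kconst (by simp) (by simp) (by simp) (by simp) (by simpa using hb1)
            (h_ge2 (by simp)) h_le
        · intro s hs
          refine Kconst (by simp) (by simp) (by simp) (by simp) (by simpa using hb1)
            (le_trans (by norm_num) (h_ge3 (by simp))) h_le
  -- raise g to degree 2, then f to degree 1
  have seg3 : JoinedIn P4 (pt 0 0 0 (x 3) (x 4) 0 0 0 0 0 1 0)
      (pt 0 0 0 (x 3) (x 4) 1 0 0 0 0 1 0) := by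
    refine segJoined _ _ ?_
    intro s hs
    refine Khcube (by simp) (by simp) (by simp) (by simp) (by simp) (by simp)
      (by simpa using hb1) ?_
    rw [f_eq0 (by simp) (by simp)]
    exact lt_of_lt_of_le zero_lt_one (g_ge1 (by simpa using hb1))
  have seg4 : JoinedIn P4 (pt 0 0 0 (x 3) (x 4) 1 0 0 0 0 1 0)
      (pt 0 1 0 (x 3) (x 4) 1 0 0 0 0 1 0) := by
    refine segJoined _ _ ?_
    intro s hs
    refine Khcube (by simp) (by simp) (by simp) (by simp) (by simp) (by simp)
      (by simpa using hb1) ?_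
    exact lt_of_le_of_lt (f_le1 (by simp)) (lt_of_lt_of_le one_lt_two (g_ge2 (by simp)))
  refine seg1.trans (seg2.trans (seg3.trans (seg4.trans ?_)))
  exact FW rfl one_ne_zero (g_ge2 (by simp)) (dg_lt_dh3 (by simp) (by simp)) h_le

-- ===== quadratic-f navigation =====
lemma convex_contra {e s B : ℝ} (hp : 0 < e) (hB : 0 < B) (h0 : 0 ≤ s) (h1 : s ≤ 1)
    (hk : (1-s)*e + s*B = 0) : False := by
  rcases eq_or_lt_of_le h0 with h | h
  · rw [← h] at hk
    norm_num at hk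
    linarith
  · nlinarith [mul_pos h hB, mul_nonneg (by linarith : (0:ℝ) ≤ 1-s) hp.le]

lemma Pge {b3 b1 c3 c1 : ℝ} (hb3 : b3 ≠ 0) (h : 0 ≤ b1 * b3) :
    ∀ r : ℝ, 0 < r → b3 * r + b1 = 0 → c3 * r + c1 = 0 → False := by
  intro r hr hb _
  have h3 : 0 < b3 ^ 2 * r := by positivity
  have key : b3 ^ 2 * r + b1 * b3 = 0 := by linear_combination b3 * hb
  linarith

lemma segKquad (a2 b3 c4 u1 v1 w1 u2 v2 w2 : ℝ) (h2 : a2 ≠ 0) (hb3 : b3 ≠ 0) (hc4 : c4 ≠ 0)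
    (hbc : ∀ s ∈ Set.Icc (0:ℝ) 1, ¬((1-s)*u1 + s*u2 = 0 ∧ (1-s)*v1 + s*v2 = 0))
    (hP : ∀ s ∈ Set.Icc (0:ℝ) 1, ∀ r : ℝ, 0 < r → b3*r + ((1-s)*u1+s*u2) = 0 →
      ((1-s)*w1+s*w2)*r + ((1-s)*v1+s*v2) = 0 → False) :
    JoinedIn P4 (pt 0 0 a2 0 u1 0 b3 0 v1 0 w1 c4) (pt 0 0 a2 0 u2 0 b3 0 v2 0 w2 c4) := by
  refine segJoined _ _ ?_
  intro s hs
  refine Kquad (by simp) (by simpa using h2) (by simpa using hb3) (by simpa using hc4) ?_ ?_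
  · simpa using hbc s hs
  · intro r hr hgr hhr
    simp only [segFn_apply, pt_6, pt_4, pt_10, pt_8, comb_self] at hgr hhr
    exact hP s hs r hr hgr hhr

lemma flipTail (a2 b3 c4 c : ℝ) (h2 : a2 ≠ 0) (hb3 : b3 ≠ 0) (hc4 : c4 ≠ 0) (hc : c ≠ 0) :
    JoinedIn P4 (pt 0 0 a2 0 0 0 b3 0 c 0 0 c4) (pt 0 0 a2 0 0 0 b3 0 1 0 0 c4) := by
  rcases lt_or_gt_of_ne hc with hneg | hpos
  · refine (segKquad a2 b3 c4 0 c 0 b3 c 0 h2 hb3 hc4 ?_ ?_).trans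
      ((segKquad a2 b3 c4 b3 c 0 b3 1 0 h2 hb3 hc4 ?_ ?_).trans
        (segKquad a2 b3 c4 b3 1 0 0 1 0 h2 hb3 hc4 ?_ ?_))
    · intro s hs; rintro ⟨-, hv⟩; apply hc; linarith [hv]
    · intro s hs r hr hb hcc
      exact Pge hb3 (by nlinarith [hs.1, sq_nonneg b3]) r hr hb hcc
    · intro s hs; rintro ⟨hu, -⟩; apply hb3; linarith [hu]
    · intro s hs r hr hb hcc
      exact Pge hb3 (by nlinarith [sq_nonneg b3]) r hr hb hcc
    · intro s hs; rintro ⟨-, hv⟩; linarith [hv]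
    · intro s hs r hr hb hcc
      exact Pge hb3 (by nlinarith [hs.2, sq_nonneg b3]) r hr hb hcc
  · refine segKquad a2 b3 c4 0 c 0 0 1 0 h2 hb3 hc4 ?_ ?_
    · intro s hs; rintro ⟨-, hv⟩
      exact convex_contra hpos one_pos hs.1 hs.2 (by linear_combination hv)
    · intro s hs r hr hb hcc
      exact Pge hb3 (by nlinarith) r hr hb hcc

lemma navQuad (a2 b3 c4 b1 c1 c3 : ℝ) (h2 : a2 ≠ 0) (hb3 : b3 ≠ 0) (hc4 : c4 ≠ 0)
    (hbc : ¬(b1 = 0 ∧ c1 = 0))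
    (hP : ∀ r : ℝ, 0 < r → b3 * r + b1 = 0 → c3 * r + c1 = 0 → False) :
    JoinedIn P4 (pt 0 0 a2 0 b1 0 b3 0 c1 0 c3 c4) (pt 0 0 a2 0 0 0 b3 0 1 0 0 c4) := by
  by_cases hb1 : b1 = 0
  · have hc1 : c1 ≠ 0 := fun h => hbc ⟨hb1, h⟩
    set ε : ℝ := if 0 < c1 then 1 else -1 with hε
    have hεsign : (0 < c1 ∧ ε = 1) ∨ (c1 < 0 ∧ ε = -1) := by
      rcases lt_trichotomy c1 0 with h | h | h
      · right; exact ⟨h, by rw [hε, if_neg (by linarith)]⟩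
      · exact absurd h hc1
      · left; exact ⟨h, by rw [hε, if_pos h]⟩
    have hseg : JoinedIn P4 (pt 0 0 a2 0 b1 0 b3 0 c1 0 c3 c4)
        (pt 0 0 a2 0 b1 0 b3 0 ε 0 0 c4) := by
      refine segKquad a2 b3 c4 b1 c1 c3 b1 ε 0 h2 hb3 hc4 ?_ ?_
      · intro s hs; rintro ⟨-, hv⟩
        rcases hεsign with ⟨hp, hee⟩ | ⟨hn, hee⟩ <;> rw [hee] at hv
        · exact convex_contra hp one_pos hs.1 hs.2 (by linear_combination hv)
        · exact convex_contra (neg_pos.2 hn) one_pos hs.1 hs.2 (by linear_combination -hv)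
      · intro s hs r hr hb hcc
        refine Pge hb3 ?_ r hr hb hcc
        rw [comb_self, hb1, zero_mul]
    have hεne : ε ≠ 0 := by
      rcases hεsign with ⟨-, hee⟩ | ⟨-, hee⟩ <;> rw [hee] <;> norm_num
    refine hseg.trans ?_
    rw [hb1]
    exact flipTail a2 b3 c4 ε h2 hb3 hc4 hεne
  · by_cases hsign : 0 ≤ b1 * b3
    · refine (segKquad a2 b3 c4 b1 c1 c3 b1 1 0 h2 hb3 hc4 ?_ ?_).trans
        (segKquad a2 b3 c4 b1 1 0 0 1 0 h2 hb3 hc4 ?_ ?_)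
      · intro s hs; rintro ⟨hu, -⟩; apply hb1; linarith [hu]
      · intro s hs r hr hb hcc
        refine Pge hb3 ?_ r hr hb hcc
        rw [comb_self]; exact hsign
      · intro s hs; rintro ⟨-, hv⟩; linarith [hv]
      · intro s hs r hr hb hcc
        refine Pge hb3 ?_ r hr hb hcc
        nlinarith [hsign, hs.2]
    · push_neg at hsign
      have hd : b3 * c1 - b1 * c3 ≠ 0 := by
        intro h0
        refine hP (-b1/b3) ?_ ?_ ?_
        · have : b1 / b3 < 0 := div_neg_iff.2 (mul_neg_iff.1 hsign)
          rw [neg_div]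
          linarith
        · field_simp
          try ring
        · field_simp
          try linear_combination h0
      set e : ℝ := (b3 * c1 - b1 * c3) * b3 with he
      have he0 : e ≠ 0 := mul_ne_zero hd hb3
      set ε : ℝ := if 0 < e then 1 else -1 with hε
      have hεsign : (0 < e ∧ ε = 1) ∨ (e < 0 ∧ ε = -1) := by
        rcases lt_trichotomy e 0 with h | h | h
        · right; exact ⟨h, by rw [hε, if_neg (by linarith)]⟩
        · exact absurd h he0
        · left; exact ⟨h, by rw [hε, if_pos h]⟩
      have hεne : ε ≠ 0 := by
        rcases hεsign with ⟨-, hee⟩ | ⟨-, hee⟩ <;> rw [hee] <;> norm_num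
      refine (segKquad a2 b3 c4 b1 c1 c3 b1 ε 0 h2 hb3 hc4 ?_ ?_).trans
        ((segKquad a2 b3 c4 b1 ε 0 0 ε 0 h2 hb3 hc4 ?_ ?_).trans
          (flipTail a2 b3 c4 ε h2 hb3 hc4 hεne))
      · intro s hs; rintro ⟨hu, -⟩; apply hb1; linarith [hu]
      · intro s hs r hr hb hcc
        have key2 : (1-s) * e + s * ε * b3^2 = 0 := by
          rw [he]; linear_combination b3 * b3 * hcc - ((1-s)*c3 + s*0) * b3 * hb
        rcases hεsign with ⟨hp, hee⟩ | ⟨hn, hee⟩ <;> rw [hee] at key2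
        · exact convex_contra hp (pow_two_pos_of_ne_zero hb3) hs.1 hs.2
            (by linear_combination key2)
        · exact convex_contra (neg_pos.2 hn) (pow_two_pos_of_ne_zero hb3) hs.1 hs.2
            (by linear_combination -key2)
      · intro s hs; rintro ⟨-, hv⟩; apply hεne; linarith [hv]
      · intro s hs r hr hb hcc
        apply hεne; linarith [hcc]

lemma quadMain {x : Fin 12 → ℝ} (hx : x ∈ P4) (h1 : x 1 = 0) (h2 : x 2 ≠ 0) :
    JoinedIn P4 x H4 := by
  obtain ⟨hb3, hc4, hbc, hP⟩ := Dquad hx h1 h2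
  have seg1 : JoinedIn P4 x
      (pt 0 0 (x 2) (x 3) (x 4) (x 5) (x 6) (x 7) (x 8) (x 9) (x 10) (x 11)) := by
    refine segJoined _ _ ?_
    intro s hs
    refine Kquad (by simp [h1]) (by simpa using h2) (by simpa using hb3)
      (by simpa using hc4) (by simpa using hbc) ?_
    intro r hr hgr hhr
    simp only [segFn_apply, pt_6, pt_4, pt_10, pt_8, comb_self] at hgr hhr
    exact hP r hr hgr hhr
  have seg2 : JoinedIn P4
      (pt 0 0 (x 2) (x 3) (x 4) (x 5) (x 6) (x 7) (x 8) (x 9) (x 10) (x 11))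
      (pt 0 0 (x 2) 0 (x 4) 0 (x 6) 0 (x 8) 0 (x 10) (x 11)) := by
    refine segJoined _ _ ?_
    intro s hs
    refine Kquad (by simp) (by simpa using h2) (by simpa using hb3)
      (by simpa using hc4) (by simpa using hbc) ?_
    intro r hr hgr hhr
    simp only [segFn_apply, pt_6, pt_4, pt_10, pt_8, comb_self] at hgr hhr
    exact hP r hr hgr hhr
  have seg3 := navQuad (x 2) (x 6) (x 11) (x 4) (x 8) (x 10) h2 hb3 hc4 hbc hP
  have seg4 : JoinedIn P4 (pt 0 0 (x 2) 0 0 0 (x 6) 0 1 0 0 (x 11))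
      (pt 0 0 0 0 0 0 (x 6) 0 1 0 0 (x 11)) := by
    refine segJoined _ _ ?_
    intro s hs
    exact Kcube (by simp) (by simp) (by simpa using hb3) (by simpa using hc4) (by simp)
  have seg5 : JoinedIn P4 (pt 0 0 0 0 0 0 (x 6) 0 1 0 0 (x 11))
      (pt 0 1 0 0 0 0 (x 6) 0 1 0 0 (x 11)) := by
    refine segJoined _ _ ?_
    intro s hs
    exact Kcube (by simp) (by simp) (by simpa using hb3) (by simpa using hc4) (by simp)
  refine seg1.trans (seg2.trans (seg3.trans (seg4.trans (seg5.trans ?_))))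
  exact FW rfl one_ne_zero (le_trans (by norm_num) (g_ge3 (by simpa using hb3)))
    (dg_lt_dh4 (by simpa using hc4)) h_le

-- ===== extra coefficient lemmas =====
section coeffs2
variable {x : Fin 12 → ℝ}
lemma fcoeff0 : (fPoly x).coeff 0 = x 0 := by simp [fPoly, coeff_one]
lemma fcoeff1 : (fPoly x).coeff 1 = x 1 := by simp [fPoly, coeff_one]
lemma fcoeff2 : (fPoly x).coeff 2 = x 2 := by simp [fPoly]
lemma gcoeff0 : (gPoly x).coeff 0 = x 3 := by simp [gPoly, coeff_one]
lemma hcoeff0 : (hPoly x).coeff 0 = x 7 := by simp [hPoly, coeff_one]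
lemma hcoeff1 : (hPoly x).coeff 1 = x 8 := by simp [hPoly, coeff_one]
end coeffs2

-- ===== polynomial reconstruction =====
lemma recon2 (p : ℝ[X]) (hp : p.natDegree ≤ 2) :
    C (p.coeff 2) * X^2 + C (p.coeff 1) * X + C (p.coeff 0) = p := by
  ext n
  rcases n with _ | _ | _ | n
  · simp
  · simp
  · simp
  · have e2 : ¬(n + 1 + 1 + 1 = 2) := by omega
    have e1 : ¬(n + 1 + 1 + 1 = 1) := by omega
    have e0 : ¬(n + 1 + 1 + 1 = 0) := by omega
    rw [coeff_eq_zero_of_natDegree_lt (show p.natDegree < n + 1 + 1 + 1 by omega)]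
    simp [coeff_X_pow, coeff_C, e2, e1, e0, coeff_X]

lemma recon3 (p : ℝ[X]) (hp : p.natDegree ≤ 3) :
    C (p.coeff 3) * X^3 + C (p.coeff 2) * X^2 + C (p.coeff 1) * X + C (p.coeff 0) = p := by
  ext n
  rcases n with _ | _ | _ | _ | n
  · simp
  · simp
  · simp
  · simp
  · have e3 : ¬(n + 1 + 1 + 1 + 1 = 3) := by omega
    have e2 : ¬(n + 1 + 1 + 1 + 1 = 2) := by omega
    have e1 : ¬(n + 1 + 1 + 1 + 1 = 1) := by omega
    have e0 : ¬(n + 1 + 1 + 1 + 1 = 0) := by omega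
    rw [coeff_eq_zero_of_natDegree_lt (show p.natDegree < n + 1 + 1 + 1 + 1 by omega)]
    simp [coeff_X_pow, coeff_C, e3, e2, e1, e0, coeff_X]

lemma recon4 (p : ℝ[X]) (hp : p.natDegree ≤ 4) :
    C (p.coeff 4) * X^4 + C (p.coeff 3) * X^3 + C (p.coeff 2) * X^2 + C (p.coeff 1) * X
      + C (p.coeff 0) = p := by
  ext n
  rcases n with _ | _ | _ | _ | _ | n
  · simp
  · simp
  · simp
  · simp
  · simp
  · have e4 : ¬(n + 1 + 1 + 1 + 1 + 1 = 4) := by omega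
    have e3 : ¬(n + 1 + 1 + 1 + 1 + 1 = 3) := by omega
    have e2 : ¬(n + 1 + 1 + 1 + 1 + 1 = 2) := by omega
    have e1 : ¬(n + 1 + 1 + 1 + 1 + 1 = 1) := by omega
    have e0 : ¬(n + 1 + 1 + 1 + 1 + 1 = 0) := by omega
    rw [coeff_eq_zero_of_natDegree_lt (show p.natDegree < n + 1 + 1 + 1 + 1 + 1 by omega)]
    simp [coeff_X_pow, coeff_C, e4, e3, e2, e1, e0, coeff_X]

-- ===== the translation path =====
noncomputable def tQ (x : Fin 12 → ℝ) : ℝ := -(x 1) / (2 * x 2)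

noncomputable def tpath (x : Fin 12 → ℝ) (s : ℝ) : Fin 12 → ℝ :=
  pt ((taylor (s * tQ x) (fPoly x)).coeff 0) ((taylor (s * tQ x) (fPoly x)).coeff 1)
     ((taylor (s * tQ x) (fPoly x)).coeff 2)
     ((taylor (s * tQ x) (gPoly x)).coeff 0) ((taylor (s * tQ x) (gPoly x)).coeff 1)
     ((taylor (s * tQ x) (gPoly x)).coeff 2) ((taylor (s * tQ x) (gPoly x)).coeff 3)
     ((taylor (s * tQ x) (hPoly x)).coeff 0) ((taylor (s * tQ x) (hPoly x)).coeff 1)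
     ((taylor (s * tQ x) (hPoly x)).coeff 2) ((taylor (s * tQ x) (hPoly x)).coeff 3)
     ((taylor (s * tQ x) (hPoly x)).coeff 4)

lemma tpath_f (x : Fin 12 → ℝ) (s : ℝ) :
    fPoly (tpath x s) = taylor (s * tQ x) (fPoly x) := by
  unfold fPoly tpath
  simp only [pt_0, pt_1, pt_2]
  exact recon2 _ (by rw [natDegree_taylor]; exact f_le)

lemma tpath_g (x : Fin 12 → ℝ) (s : ℝ) :
    gPoly (tpath x s) = taylor (s * tQ x) (gPoly x) := by
  unfold gPoly tpath
  simp only [pt_3, pt_4, pt_5, pt_6]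
  exact recon3 _ (by rw [natDegree_taylor]; exact g_le)

lemma tpath_h (x : Fin 12 → ℝ) (s : ℝ) :
    hPoly (tpath x s) = taylor (s * tQ x) (hPoly x) := by
  unfold hPoly tpath
  simp only [pt_7, pt_8, pt_9, pt_10, pt_11]
  exact recon4 _ (by rw [natDegree_taylor]; exact h_le)

lemma tpath_cont (x : Fin 12 → ℝ) : Continuous (tpath x) := by
  have key : ∀ (p : ℝ[X]) (k : ℕ), Continuous fun s : ℝ => (taylor (s * tQ x) p).coeff k := by
    intro p k
    simp only [taylor_coeff]
    exact (Polynomial.continuous _).comp (continuous_id.mul continuous_const)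
  unfold tpath pt
  refine continuous_pi fun i => ?_
  fin_cases i <;> exact key _ _

lemma tpath_zero (x : Fin 12 → ℝ) : tpath x 0 = x := by
  funext i
  fin_cases i
  · show (taylor (0 * tQ x) (fPoly x)).coeff 0 = x 0
    rw [zero_mul, taylor_zero, fcoeff0]
  · show (taylor (0 * tQ x) (fPoly x)).coeff 1 = x 1
    rw [zero_mul, taylor_zero, fcoeff1]
  · show (taylor (0 * tQ x) (fPoly x)).coeff 2 = x 2
    rw [zero_mul, taylor_zero, fcoeff2]
  · show (taylor (0 * tQ x) (gPoly x)).coeff 0 = x 3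
    rw [zero_mul, taylor_zero, gcoeff0]
  · show (taylor (0 * tQ x) (gPoly x)).coeff 1 = x 4
    rw [zero_mul, taylor_zero, gcoeff1]
  · show (taylor (0 * tQ x) (gPoly x)).coeff 2 = x 5
    rw [zero_mul, taylor_zero, gcoeff2]
  · show (taylor (0 * tQ x) (gPoly x)).coeff 3 = x 6
    rw [zero_mul, taylor_zero, gcoeff3]
  · show (taylor (0 * tQ x) (hPoly x)).coeff 0 = x 7
    rw [zero_mul, taylor_zero, hcoeff0]
  · show (taylor (0 * tQ x) (hPoly x)).coeff 1 = x 8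
    rw [zero_mul, taylor_zero, hcoeff1]
  · show (taylor (0 * tQ x) (hPoly x)).coeff 2 = x 9
    rw [zero_mul, taylor_zero, hcoeff2]
  · show (taylor (0 * tQ x) (hPoly x)).coeff 3 = x 10
    rw [zero_mul, taylor_zero, hcoeff3]
  · show (taylor (0 * tQ x) (hPoly x)).coeff 4 = x 11
    rw [zero_mul, taylor_zero, hcoeff4]

lemma transStep {x : Fin 12 → ℝ} (hx : x ∈ P4) (h2 : x 2 ≠ 0) : JoinedIn P4 x H4 := by
  obtain ⟨⟨hinj, hder⟩, hfg, hgh, hh⟩ := id hx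
  have hmem : ∀ s : ℝ, s ∈ Set.Icc (0:ℝ) 1 → tpath x s ∈ P4 := by
    intro s hs
    have eder : ∀ (p : ℝ[X]) (t : ℝ),
        (derivative (taylor (s * tQ x) p)).eval t = (derivative p).eval (t + s * tQ x) := by
      intro p t
      rw [taylor_apply, derivative_comp]
      simp [eval_comp]
    refine ⟨⟨?_, ?_⟩, ?_, ?_, ?_⟩
    · intro t u h'
      rw [tpath_f, tpath_g, tpath_h] at h'
      simp only [taylor_eval] at h'
      exact add_right_cancel (hinj h')
    · intro t
      rw [tpath_f, tpath_g, tpath_h, eder, eder, eder]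
      exact hder (t + s * tQ x)
    · rw [tpath_f, tpath_g, natDegree_taylor, natDegree_taylor]; exact hfg
    · rw [tpath_g, tpath_h, natDegree_taylor, natDegree_taylor]; exact hgh
    · rw [tpath_h, natDegree_taylor]; exact hh
  have hjoin : JoinedIn P4 x (tpath x 1) := by
    have := joinedOfPath (tpath x) (tpath_cont x) hmem
    rwa [tpath_zero] at this
  have hy1 : tpath x 1 1 = 0 := by
    show (taylor (1 * tQ x) (fPoly x)).coeff 1 = 0
    rw [one_mul, taylor_coeff_one, fdeval]
    unfold tQ
    field_simp
    ring
  have hy2 : tpath x 1 2 = x 2 := by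
    show (taylor (1 * tQ x) (fPoly x)).coeff 2 = x 2
    rw [one_mul]
    have hdeg : (taylor (tQ x) (fPoly x)).natDegree = 2 := by rw [natDegree_taylor, f_eq2 h2]
    have e1 : (taylor (tQ x) (fPoly x)).coeff 2 = (taylor (tQ x) (fPoly x)).leadingCoeff := by
      rw [leadingCoeff, hdeg]
    rw [e1, taylor_apply, leadingCoeff_comp (by simp [natDegree_X_add_C]),
      (monic_X_add_C _).leadingCoeff, one_pow, mul_one, leadingCoeff, f_eq2 h2, fcoeff2]
  exact hjoin.trans (quadMain (hmem 1 (by norm_num)) hy1 (by rw [hy2]; exact h2))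

-- ===== main theorem =====
/-- The space `P₄` is path connected. -/
theorem stmt_12 : IsPathConnected P4 := by
  have hH : H4 ∈ P4 := by
    refine Klin (x := H4) rfl one_ne_zero (g_ge2 ?_) (dg_lt_dh3 ?_ ?_) h_le
    · show (1:ℝ) ≠ 0; norm_num
    · show (1:ℝ) ≠ 0; norm_num
    · rfl
  refine ⟨H4, hH, ?_⟩
  intro y hy
  have main : JoinedIn P4 y H4 := by
    by_cases h2 : y 2 = 0
    · by_cases h1 : y 1 = 0
      · by_cases hdg : 2 ≤ (gPoly y).natDegree
        · exact NonConstSmall hy h2 h1 hdg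
        · refine constRoute hy h2 h1 ?_
          have hfg := hy.2.1
          rw [f_eq0 h2 h1] at hfg
          omega
      · refine FW h2 h1 ?_ hy.2.2.1 hy.2.2.2
        have hfg := hy.2.1
        rw [f_eq1 h2 h1] at hfg
        omega
    · exact transStep hy h2
  exact main.symm
end Mem
end

section
/- Fix e₁, e₂, e₃ ∈ {−1,1}. The set N = {(a,b,c) ∈ ℝ³ : the map t ↦ (e₁t²+at, e₂t³+bt, e₃t⁴+ct) is a polynomial knot}, equipped with the subspace topology from ℝ³, is path connected. -/
open Polynomial

lemma core_iff (A B C : ℝ) :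
    (Function.Injective (fun t : ℝ => (t^2 + A*t, t^3 + B*t, t^4 + C*t)) ∧
      ∀ t : ℝ, (2*t + A, 3*t^2 + B, 4*t^3 + C) ≠ ((0:ℝ), (0:ℝ), (0:ℝ))) ↔
    (0 < 3*A^2 + 4*B ∨ A^3 + 2*A*B + C ≠ 0) := by
  constructor
  · rintro ⟨hinj, hder⟩
    by_contra hcon
    push_neg at hcon
    obtain ⟨hD, hF⟩ := hcon
    rcases lt_or_eq_of_le hD with hDlt | hDeq
    · -- D < 0 : build a double point
      set d := Real.sqrt (-(3*A^2 + 4*B)) with hddef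
      have hd2 : d^2 = -(3*A^2 + 4*B) := Real.sq_sqrt (by linarith)
      have hdpos : 0 < d := Real.sqrt_pos.2 (by linarith)
      have hkey : (-A + d)/2 = (-A - d)/2 := by
        have := hinj (a₁ := (-A + d)/2) (a₂ := (-A - d)/2) ?_
        · exact this
        · simp only [Prod.mk.injEq]
          refine ⟨by ring, ?_, ?_⟩
          · linear_combination (d/4) * hd2
          · linear_combination (-(A*d/2)) * hd2 + d * hF
      linarith
    · -- D = 0 : derivative vanishes at -A/2
      apply hder (-A/2)
      simp only [Prod.mk.injEq]
      refine ⟨by ring, by linarith, ?_⟩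
      linear_combination hF - (A/2) * hDeq
  · intro hcond
    constructor
    · intro s t hst
      by_contra hne
      simp only [Prod.mk.injEq] at hst
      obtain ⟨h1', h2', h3'⟩ := hst
      have hu : s - t ≠ 0 := sub_ne_zero.2 hne
      have hp : s + t + A = 0 := by
        have h : (s - t) * (s + t + A) = 0 := by linear_combination h1'
        exact (mul_eq_zero.mp h).resolve_left hu
      have hq : s^2 + s*t + t^2 + B = 0 := by
        have h : (s - t) * (s^2 + s*t + t^2 + B) = 0 := by linear_combination h2'
        exact (mul_eq_zero.mp h).resolve_left hu
      have hr : (s + t) * (s^2 + t^2) + C = 0 := by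
        have h : (s - t) * ((s + t) * (s^2 + t^2) + C) = 0 := by linear_combination h3'
        exact (mul_eq_zero.mp h).resolve_left hu
      have hA : A = -(s+t) := by linarith
      have hB : B = -(s^2 + s*t + t^2) := by linarith
      have hC : C = -((s+t) * (s^2+t^2)) := by nlinarith [hr]
      rcases hcond with h | h
      · rw [hA, hB] at h
        nlinarith [sq_nonneg (s - t)]
      · apply h
        rw [hA, hB, hC]; ring
    · intro t heq
      simp only [Prod.mk.injEq] at heq
      obtain ⟨h1', h2', h3'⟩ := heq
      have hA : A = -(2*t) := by linarith
      have hB : B = -(3*t^2) := by linarith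
      have hC : C = -(4*t^3) := by linarith
      rcases hcond with h | h
      · rw [hA, hB] at h; nlinarith
      · apply h
        rw [hA, hB, hC]; ring

lemma knot_iff (e₁ e₂ e₃ a b c : ℝ) (h1 : e₁ * e₁ = 1) (h2 : e₂ * e₂ = 1)
    (h3 : e₃ * e₃ = 1) :
    IsPolyKnot (C e₁ * X ^ 2 + C a * X) (C e₂ * X ^ 3 + C b * X) (C e₃ * X ^ 4 + C c * X) ↔
      (0 < 3 * a ^ 2 + 4 * e₂ * b ∨ e₁ * a ^ 3 + 2 * e₁ * e₂ * a * b + e₃ * c ≠ 0) := by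
  have he₁0 : e₁ ≠ 0 := fun h => by simp [h] at h1
  have he₂0 : e₂ ≠ 0 := fun h => by simp [h] at h2
  have he₃0 : e₃ ≠ 0 := fun h => by simp [h] at h3
  have key := core_iff (e₁*a) (e₂*b) (e₃*c)
  constructor
  · rintro ⟨hinj, hder⟩
    have h' : (0 < 3*(e₁*a)^2 + 4*(e₂*b) ∨ (e₁*a)^3 + 2*(e₁*a)*(e₂*b) + e₃*c ≠ 0) := by
      apply key.mp
      constructor
      · intro s t hst
        apply hinj
        simp only [Prod.mk.injEq] at hst ⊢
        obtain ⟨q1, q2, q3⟩ := hst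
        simp only [eval_add, eval_mul, eval_C, eval_pow, eval_X]
        refine ⟨?_, ?_, ?_⟩
        · linear_combination e₁ * q1 + (a*t - a*s) * h1
        · linear_combination e₂ * q2 + (b*t - b*s) * h2
        · linear_combination e₃ * q3 + (c*t - c*s) * h3
      · intro t ht
        apply hder t
        simp only [Prod.mk.injEq] at ht ⊢
        obtain ⟨q1, q2, q3⟩ := ht
        simp only [derivative_add, derivative_C_mul, derivative_X_pow, derivative_C,
          derivative_X, eval_add, eval_mul, eval_C, eval_pow, eval_X, eval_one]
        norm_num
        refine ⟨?_, ?_, ?_⟩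
        · linear_combination e₁ * q1 - a * h1
        · linear_combination e₂ * q2 - b * h2
        · linear_combination e₃ * q3 - c * h3
    rcases h' with h | h
    · left; nlinarith [h1, h2]
    · right; intro hz; apply h; linear_combination hz + e₁*a^3 * h1
  · intro hc
    have h' := key.mpr ?_
    · obtain ⟨hinj, hder⟩ := h'
      constructor
      · intro s t hst
        apply hinj
        simp only [eval_add, eval_mul, eval_C, eval_pow, eval_X, Prod.mk.injEq] at hst ⊢
        obtain ⟨q1, q2, q3⟩ := hst
        refine ⟨?_, ?_, ?_⟩
        · have : e₁ * (s^2 + e₁*a*s) = e₁ * (t^2 + e₁*a*t) := by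
            linear_combination q1 + (a*s - a*t) * h1
          exact mul_left_cancel₀ he₁0 this
        · have : e₂ * (s^3 + e₂*b*s) = e₂ * (t^3 + e₂*b*t) := by
            linear_combination q2 + (b*s - b*t) * h2
          exact mul_left_cancel₀ he₂0 this
        · have : e₃ * (s^4 + e₃*c*s) = e₃ * (t^4 + e₃*c*t) := by
            linear_combination q3 + (c*s - c*t) * h3
          exact mul_left_cancel₀ he₃0 this
      · intro t ht
        apply hder t
        simp only [derivative_add, derivative_C_mul, derivative_X_pow, derivative_C,
          derivative_X, eval_add, eval_mul, eval_C, eval_pow, eval_X, eval_one,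
          Prod.mk.injEq] at ht ⊢
        norm_num at ht
        obtain ⟨q1, q2, q3⟩ := ht
        refine ⟨?_, ?_, ?_⟩
        · have : e₁ * (2*t + e₁*a) = 0 := by linear_combination q1 + a * h1
          exact (mul_eq_zero.mp this).resolve_left he₁0
        · have : e₂ * (3*t^2 + e₂*b) = 0 := by linear_combination q2 + b * h2
          exact (mul_eq_zero.mp this).resolve_left he₂0
        · have : e₃ * (4*t^3 + e₃*c) = 0 := by linear_combination q3 + c * h3
          exact (mul_eq_zero.mp this).resolve_left he₃0
    · rcases hc with h | h
      · left; nlinarith [h1, h2]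
      · right; intro hz; apply h
        linear_combination hz - e₁*a^3 * h1


lemma joinedIn_seg_s13 {S : Set (ℝ × ℝ × ℝ)} {x y : ℝ × ℝ × ℝ}
    (h : ∀ s : ℝ, 0 ≤ s → s ≤ 1 →
      ((1 - s) * x.1 + s * y.1, (1 - s) * x.2.1 + s * y.2.1,
        (1 - s) * x.2.2 + s * y.2.2) ∈ S) : JoinedIn S x y := by
  refine ⟨⟨⟨fun t : unitInterval =>
      ((1 - (t : ℝ)) * x.1 + (t : ℝ) * y.1, (1 - (t : ℝ)) * x.2.1 + (t : ℝ) * y.2.1,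
        (1 - (t : ℝ)) * x.2.2 + (t : ℝ) * y.2.2), ?_⟩, ?_, ?_⟩, fun t => h t t.2.1 t.2.2⟩
  · fun_prop
  · simp
  · simp

lemma convex_pos_s13 {s D M : ℝ} (hs0 : 0 ≤ s) (hs1 : s ≤ 1) (hD : 0 < D) (hM : 0 < M) :
    0 < (1 - s) * D + s * M := by
  rcases eq_or_lt_of_le hs0 with h | h
  · rw [← h]; simpa using hD
  · nlinarith [mul_pos h hM, mul_nonneg (by linarith : (0:ℝ) ≤ 1 - s) hD.le]

lemma reach_base (e₁ e₂ e₃ a b c : ℝ) (h2 : e₂ * e₂ = 1)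
    (hD : 0 < 3 * a ^ 2 + 4 * e₂ * b) :
    JoinedIn {p : ℝ × ℝ × ℝ | 0 < 3 * p.1 ^ 2 + 4 * e₂ * p.2.1 ∨
        e₁ * p.1 ^ 3 + 2 * e₁ * e₂ * p.1 * p.2.1 + e₃ * p.2.2 ≠ 0}
      (a, b, c) ((0 : ℝ), e₂, (0 : ℝ)) := by
  have step1 : JoinedIn {p : ℝ × ℝ × ℝ | 0 < 3 * p.1 ^ 2 + 4 * e₂ * p.2.1 ∨
        e₁ * p.1 ^ 3 + 2 * e₁ * e₂ * p.1 * p.2.1 + e₃ * p.2.2 ≠ 0}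
      (a, b, c) (a, e₂ * (1 + b ^ 2), c) := by
    apply joinedIn_seg_s13
    intro s hs0 hs1
    left
    show 0 < 3 * ((1 - s) * a + s * a) ^ 2 + 4 * e₂ * ((1 - s) * b + s * (e₂ * (1 + b ^ 2)))
    have heq : 3 * ((1 - s) * a + s * a) ^ 2 + 4 * e₂ * ((1 - s) * b + s * (e₂ * (1 + b ^ 2)))
        = (1 - s) * (3 * a ^ 2 + 4 * e₂ * b) + s * (3 * a ^ 2 + 4 + 4 * b ^ 2) := by
      linear_combination (4 * s * (1 + b ^ 2)) * h2
    rw [heq]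
    exact convex_pos_s13 hs0 hs1 hD (by positivity)
  have step2 : JoinedIn {p : ℝ × ℝ × ℝ | 0 < 3 * p.1 ^ 2 + 4 * e₂ * p.2.1 ∨
        e₁ * p.1 ^ 3 + 2 * e₁ * e₂ * p.1 * p.2.1 + e₃ * p.2.2 ≠ 0}
      (a, e₂ * (1 + b ^ 2), c) ((0 : ℝ), e₂, (0 : ℝ)) := by
    apply joinedIn_seg_s13
    intro s hs0 hs1
    left
    show 0 < 3 * ((1 - s) * a + s * 0) ^ 2 +
      4 * e₂ * ((1 - s) * (e₂ * (1 + b ^ 2)) + s * e₂)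
    have heq : 3 * ((1 - s) * a + s * 0) ^ 2 +
        4 * e₂ * ((1 - s) * (e₂ * (1 + b ^ 2)) + s * e₂)
        = 3 * ((1 - s) * a) ^ 2 + 4 * (1 - s) * (1 + b ^ 2) + 4 * s := by
      linear_combination (4 * (1 - s) * (1 + b ^ 2) + 4 * s) * h2
    rw [heq]
    nlinarith [sq_nonneg ((1 - s) * a), mul_nonneg (by linarith : (0:ℝ) ≤ 1 - s) (sq_nonneg b)]
  exact step1.trans step2


lemma seg_F (e₁ e₂ e₃ a b c T : ℝ) (h2 : e₂ * e₂ = 1) (h3 : e₃ * e₃ = 1)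
    (hF : e₁ * a ^ 3 + 2 * e₁ * e₂ * a * b + e₃ * c ≠ 0) :
    JoinedIn {p : ℝ × ℝ × ℝ | 0 < 3 * p.1 ^ 2 + 4 * e₂ * p.2.1 ∨
        e₁ * p.1 ^ 3 + 2 * e₁ * e₂ * p.1 * p.2.1 + e₃ * p.2.2 ≠ 0}
      (a, b, c) (a, b + T * e₂, c - 2 * e₁ * e₃ * a * T) := by
  apply joinedIn_seg_s13
  intro s hs0 hs1
  right
  show e₁ * ((1 - s) * a + s * a) ^ 3 +
      2 * e₁ * e₂ * ((1 - s) * a + s * a) * ((1 - s) * b + s * (b + T * e₂)) +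
      e₃ * ((1 - s) * c + s * (c - 2 * e₁ * e₃ * a * T)) ≠ 0
  have heq : e₁ * ((1 - s) * a + s * a) ^ 3 +
      2 * e₁ * e₂ * ((1 - s) * a + s * a) * ((1 - s) * b + s * (b + T * e₂)) +
      e₃ * ((1 - s) * c + s * (c - 2 * e₁ * e₃ * a * T))
      = e₁ * a ^ 3 + 2 * e₁ * e₂ * a * b + e₃ * c := by
    linear_combination (2 * e₁ * a * s * T) * h2 - (2 * e₁ * a * s * T) * h3
  rw [heq]
  exact hF

/-- For fixed `e₁, e₂, e₃ ∈ {−1,1}`, the set of `(a, b, c) ∈ ℝ³` such that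
`t ↦ (e₁t²+at, e₂t³+bt, e₃t⁴+ct)` is a polynomial knot is path connected. -/
theorem stmt_13 (e₁ e₂ e₃ : ℝ)
    (he₁ : e₁ = 1 ∨ e₁ = -1) (he₂ : e₂ = 1 ∨ e₂ = -1) (he₃ : e₃ = 1 ∨ e₃ = -1) :
    IsPathConnected {p : ℝ × ℝ × ℝ |
      IsPolyKnot (C e₁ * X ^ 2 + C p.1 * X) (C e₂ * X ^ 3 + C p.2.1 * X)
        (C e₃ * X ^ 4 + C p.2.2 * X)} := by
  have h1 : e₁ * e₁ = 1 := by rcases he₁ with rfl | rfl <;> norm_num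
  have h2 : e₂ * e₂ = 1 := by rcases he₂ with rfl | rfl <;> norm_num
  have h3 : e₃ * e₃ = 1 := by rcases he₃ with rfl | rfl <;> norm_num
  have hset : {p : ℝ × ℝ × ℝ |
      IsPolyKnot (C e₁ * X ^ 2 + C p.1 * X) (C e₂ * X ^ 3 + C p.2.1 * X)
        (C e₃ * X ^ 4 + C p.2.2 * X)} =
      {p : ℝ × ℝ × ℝ | 0 < 3 * p.1 ^ 2 + 4 * e₂ * p.2.1 ∨
        e₁ * p.1 ^ 3 + 2 * e₁ * e₂ * p.1 * p.2.1 + e₃ * p.2.2 ≠ 0} := by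
    ext p
    exact knot_iff e₁ e₂ e₃ p.1 p.2.1 p.2.2 h1 h2 h3
  rw [hset]
  refine ⟨((0 : ℝ), e₂, (0 : ℝ)), ?_, ?_⟩
  · left
    show 0 < 3 * (0:ℝ) ^ 2 + 4 * e₂ * e₂
    nlinarith [h2]
  · rintro ⟨a, b, c⟩ hy
    apply JoinedIn.symm
    rcases hy with hD | hF
    · exact reach_base e₁ e₂ e₃ a b c h2 hD
    · refine (seg_F e₁ e₂ e₃ a b c (1 + |3 * a ^ 2 + 4 * e₂ * b|) h2 h3 hF).trans ?_
      apply reach_base e₁ e₂ e₃ _ _ _ h2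
      have heq : 3 * a ^ 2 + 4 * e₂ * (b + (1 + |3 * a ^ 2 + 4 * e₂ * b|) * e₂)
          = 3 * a ^ 2 + 4 * e₂ * b + 4 * (1 + |3 * a ^ 2 + 4 * e₂ * b|) := by
        linear_combination (4 * (1 + |3 * a ^ 2 + 4 * e₂ * b|)) * h2
      rw [heq]
      have := neg_abs_le (3 * a ^ 2 + 4 * e₂ * b)
      have := abs_nonneg (3 * a ^ 2 + 4 * e₂ * b)
      linarith
end
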